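/- arXiv:1307.7025 — 3 statements merged into one kernel-verified Lean document; each statement's English description precedes it below -/
import Mathlib

section
/- Every single-qubit Clifford unitary is equal, up to multiplication by a complex unit scalar, to exactly one of the following 24 matrices: Z_α·X_β with α,β ∈ {0, π/2, π, 3π/2}, or X_{π/2}·Z_ε·X_γ with ε ∈ {π/2, 3π/2} and γ ∈ {0, π/2, π, 3π/2}. (Existence and uniqueness of the normal form.) -/
open scoped Matrix BigOperators
open scoped Classical

noncomputable section

/-- The state space of `n` qubits: amplitudes indexed by bit strings. -/
abbrev QState (n : ℕ) := (Fin n → Fin 2) → ℂ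

/-- Operators on `n` qubits, as matrices indexed by bit strings. -/
abbrev QOp (n : ℕ) := Matrix (Fin n → Fin 2) (Fin n → Fin 2) ℂ

def PauliX : Matrix (Fin 2) (Fin 2) ℂ := !![0, 1; 1, 0]
def PauliY : Matrix (Fin 2) (Fin 2) ℂ := !![0, -Complex.I; Complex.I, 0]
def PauliZ : Matrix (Fin 2) (Fin 2) ℂ := !![1, 0; 0, -1]

/-- The Hadamard matrix. -/
def Hmat : Matrix (Fin 2) (Fin 2) ℂ := ((1 / Real.sqrt 2 : ℝ) : ℂ) • !![1, 1; 1, -1]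

/-- `Z_θ = diag(1, e^{iθ})`. -/
def Zrot (θ : ℝ) : Matrix (Fin 2) (Fin 2) ℂ := !![1, 0; 0, Complex.exp (θ * Complex.I)]

/-- `X_θ = H · Z_θ · H`. -/
def Xrot (θ : ℝ) : Matrix (Fin 2) (Fin 2) ℂ := Hmat * Zrot θ * Hmat

/-- The single-qubit Pauli group: matrices `i^k · g` with `g ∈ {I,X,Y,Z}`. -/
def Pauli1 : Set (Matrix (Fin 2) (Fin 2) ℂ) :=
  {M | ∃ (k : Fin 4) (g : Matrix (Fin 2) (Fin 2) ℂ),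
    g ∈ ({1, PauliX, PauliY, PauliZ} : Set (Matrix (Fin 2) (Fin 2) ℂ)) ∧
    M = Complex.I ^ (k : ℕ) • g}

/-- A single-qubit Clifford unitary: a unitary normalizing the Pauli group. -/
def IsClifford1 (U : Matrix (Fin 2) (Fin 2) ℂ) : Prop :=
  U ∈ Matrix.unitaryGroup (Fin 2) ℂ ∧ ∀ g ∈ Pauli1, U * g * Uᴴ ∈ Pauli1

/-- The single-qubit operator `A` acting on qubit `v` (identity elsewhere). -/
def applyOn {n : ℕ} (v : Fin n) (A : Matrix (Fin 2) (Fin 2) ℂ) : QOp n :=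
  Matrix.of fun x y => if ∀ u, u ≠ v → x u = y u then A (x v) (y v) else 0

/-- The tensor product `A 0 ⊗ A 1 ⊗ ⋯ ⊗ A (n-1)` of single-qubit operators. -/
def tensorOp {n : ℕ} (A : Fin n → Matrix (Fin 2) (Fin 2) ℂ) : QOp n :=
  Matrix.of fun x y => ∏ j, A j (x j) (y j)

/-- The diagonal phase `(-1)^{x_u · x_v}` attached to an edge `e = {u,v}`. -/
def czPhase {n : ℕ} (e : Sym2 (Fin n)) (x : Fin n → Fin 2) : ℂ :=
  Sym2.lift ⟨fun u v => (-1 : ℂ) ^ ((x u : ℕ) * (x v : ℕ)),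
    fun u v => by dsimp only; rw [mul_comm ((x u : ℕ)) ((x v : ℕ))]⟩ e

/-- The controlled-Z operator on qubits `u`, `v`: diagonal with entries `(-1)^{x_u x_v}`. -/
def CZop {n : ℕ} (u v : Fin n) : QOp n :=
  Matrix.diagonal fun x => (-1 : ℂ) ^ ((x u : ℕ) * (x v : ℕ))

/-- The product of the (commuting, diagonal) controlled-Z operators over a set of edges. -/
def CZofEdges {n : ℕ} (E : Finset (Sym2 (Fin n))) : QOp n :=
  Matrix.diagonal fun x => ∏ e ∈ E, czPhase e x

/-- The state `|+⟩^{⊗n}`. -/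
def plusState (n : ℕ) : QState n := fun _ => ((1 / Real.sqrt 2 : ℝ) : ℂ) ^ n

/-- The basis state `|0⟩^{⊗n}`. -/
def ket0 (n : ℕ) : QState n := fun x => if x = fun _ => 0 then 1 else 0

/-- The graph state `|G⟩ = (∏_{{u,v} ∈ E} CZ_{u,v}) |+⟩^{⊗n}`. -/
def graphState {n : ℕ} (G : SimpleGraph (Fin n)) : QState n :=
  (CZofEdges G.edgeFinset).mulVec (plusState n)

/-- Local complementation of `G` about the vertex `v`: the edges inside the
neighbourhood of `v` are toggled. -/
def localComp {V : Type*} (G : SimpleGraph V) (v : V) : SimpleGraph V where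
  Adj a b := (G.Adj a v ∧ G.Adj b v ∧ a ≠ b ∧ ¬ G.Adj a b) ∨ (G.Adj a b ∧ ¬ (G.Adj a v ∧ G.Adj b v))
  symm := by
    constructor
    intro a b h
    rcases h with ⟨h1, h2, h3, h4⟩ | ⟨h1, h2⟩
    · exact Or.inl ⟨h2, h1, h3.symm, fun hc => h4 hc.symm⟩
    · exact Or.inr ⟨h1.symm, fun hc => h2 ⟨hc.2, hc.1⟩⟩
  loopless := by
    constructor
    intro a h
    rcases h with ⟨_, _, h3, _⟩ | ⟨h1, _⟩
    · exact h3 rfl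
    · exact G.ne_of_adj h1 rfl

/-- The (diagonal) product `∏_{u ∈ S} Z_u` of Pauli `Z` operators over the qubits in `S`. -/
def pauliZprod {n : ℕ} (S : Finset (Fin n)) : QOp n :=
  Matrix.diagonal fun x => ∏ u ∈ S, PauliZ (x u) (x u)

/-- The `n`-qubit Pauli group: matrices `i^k · (g_1 ⊗ ⋯ ⊗ g_n)` with `g_j ∈ {I,X,Y,Z}`. -/
def PauliGroup (n : ℕ) : Set (QOp n) :=
  {M | ∃ (k : Fin 4) (g : Fin n → Matrix (Fin 2) (Fin 2) ℂ),
    (∀ j, g j ∈ ({1, PauliX, PauliY, PauliZ} : Set (Matrix (Fin 2) (Fin 2) ℂ))) ∧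
    M = Complex.I ^ (k : ℕ) • tensorOp g}

/-- An `n`-qubit Clifford unitary: a unitary normalizing the `n`-qubit Pauli group. -/
def IsCliffordN (n : ℕ) (U : QOp n) : Prop :=
  U ∈ Matrix.unitaryGroup (Fin n → Fin 2) ℂ ∧ ∀ g ∈ PauliGroup n, U * g * Uᴴ ∈ PauliGroup n

/-- The six-element set `R` of allowed vertex operators of an rGS-LC diagram. -/
def Rset : Set (Matrix (Fin 2) (Fin 2) ℂ) :=
  {M | (∃ k : Fin 4, M = Zrot ((k : ℕ) * (Real.pi / 2))) ∨
    M = Xrot (Real.pi / 2) * Zrot (Real.pi / 2) ∨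
    M = Xrot (Real.pi / 2) * Zrot (3 * Real.pi / 2)}

/-- The two elements of `R` that have a red node. -/
def hasRedNode (M : Matrix (Fin 2) (Fin 2) ℂ) : Prop :=
  M = Xrot (Real.pi / 2) * Zrot (Real.pi / 2) ∨ M = Xrot (Real.pi / 2) * Zrot (3 * Real.pi / 2)

/-- An rGS-LC datum: all vertex operators in `R`, and no two adjacent vertices both
have vertex operators with a red node. -/
def IsRGSLC {n : ℕ} (G : SimpleGraph (Fin n)) (A : Fin n → Matrix (Fin 2) (Fin 2) ℂ) : Prop :=
  (∀ v, A v ∈ Rset) ∧ ∀ v w, G.Adj v w → ¬ (hasRedNode (A v) ∧ hasRedNode (A w))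

/-- The state `|G; A⟩ = (A_1 ⊗ ⋯ ⊗ A_n)|G⟩` of a GS-LC datum. -/
def rgslcState {n : ℕ} (G : SimpleGraph (Fin n)) (A : Fin n → Matrix (Fin 2) (Fin 2) ℂ) :
    QState n :=
  (tensorOp A).mulVec (graphState G)

/-- A pair of rGS-LC data is simplified if there is no pair of vertices `p`, `q` with an
unpaired red node at `p` in the first diagram and at `q` in the second, `p`, `q` adjacent
in one of the graphs. -/
def SimplifiedPair {n : ℕ} (G₁ : SimpleGraph (Fin n)) (A : Fin n → Matrix (Fin 2) (Fin 2) ℂ)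
    (G₂ : SimpleGraph (Fin n)) (B : Fin n → Matrix (Fin 2) (Fin 2) ℂ) : Prop :=
  ¬ ∃ p q, (hasRedNode (A p) ∧ ¬ hasRedNode (B p)) ∧ (hasRedNode (B q) ∧ ¬ hasRedNode (A q)) ∧
    (G₁.Adj p q ∨ G₂.Adj p q)

/-- The 24 normal-form matrices: `Z_α·X_β` with `α,β ∈ {0,π/2,π,3π/2}` (first summand),
or `X_{π/2}·Z_ε·X_γ` with `ε ∈ {π/2, 3π/2}` and `γ ∈ {0,π/2,π,3π/2}` (second summand). -/
def normalForm : (Fin 4 × Fin 4) ⊕ (Fin 2 × Fin 4) → Matrix (Fin 2) (Fin 2) ℂ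
  | Sum.inl (a, b) => Zrot ((a : ℕ) * (Real.pi / 2)) * Xrot ((b : ℕ) * (Real.pi / 2))
  | Sum.inr (e, g) =>
      Xrot (Real.pi / 2) * Zrot (Real.pi / 2 + (e : ℕ) * Real.pi) * Xrot ((g : ℕ) * (Real.pi / 2))

namespace CliffNF
open Complex Matrix

lemma s2mul : ((1 / Real.sqrt 2 : ℝ) : ℂ) * ((1 / Real.sqrt 2 : ℝ) : ℂ) = 1/2 := by
  rw [← Complex.ofReal_mul, div_mul_div_comm, one_mul,
    Real.mul_self_sqrt (by norm_num : (0:ℝ) ≤ 2)]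
  norm_num

lemma Hmat_ct : Hmatᴴ = Hmat := by
  ext i j
  fin_cases i <;> fin_cases j <;>
    simp [Hmat, Matrix.conjTranspose_apply]

lemma Hmat_mul_Hmat : Hmat * Hmat = 1 := by
  rw [Hmat, smul_mul_assoc, Matrix.mul_smul, smul_smul, s2mul, Matrix.mul_fin_two,
    Matrix.one_fin_two]
  norm_num

def cnj (U g : Matrix (Fin 2) (Fin 2) ℂ) : Matrix (Fin 2) (Fin 2) ℂ := U * g * Uᴴ

lemma cnj_mul (A B g : Matrix (Fin 2) (Fin 2) ℂ) : cnj (A * B) g = cnj A (cnj B g) := by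
  simp [cnj, Matrix.conjTranspose_mul, Matrix.mul_assoc]

lemma cnj_neg (A g : Matrix (Fin 2) (Fin 2) ℂ) : cnj A (-g) = -cnj A g := by
  simp [cnj]

end CliffNF
namespace CliffNF
open Complex Matrix

def Dm (w : ℂ) : Matrix (Fin 2) (Fin 2) ℂ := !![1, 0; 0, w]

lemma Dm_ct (w : ℂ) : (Dm w)ᴴ = Dm (starRingEnd ℂ w) := by
  ext i j
  fin_cases i <;> fin_cases j <;> simp [Dm, Matrix.conjTranspose_apply]

lemma exp_k (k : ℕ) : Complex.exp ((((k : ℝ) * (Real.pi/2)) : ℝ) * Complex.I) = Complex.I ^ k := by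
  push_cast
  rw [show ((k:ℂ) * (↑Real.pi/2)) * Complex.I = (k : ℕ) * ((↑(Real.pi/2)) * Complex.I) by push_cast; ring,
    Complex.exp_nat_mul, Complex.exp_mul_I, ← Complex.ofReal_cos, ← Complex.ofReal_sin,
    Real.cos_pi_div_two, Real.sin_pi_div_two]
  norm_num

lemma Zrot_k (k : ℕ) : Zrot ((k : ℝ) * (Real.pi/2)) = Dm (Complex.I ^ k) := by
  rw [Zrot, Dm, exp_k]

lemma Zrot_eps (e : ℕ) : Zrot (Real.pi/2 + (e : ℝ) * Real.pi) = Dm (Complex.I ^ (1 + 2*e)) := by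
  rw [show Real.pi/2 + (e:ℝ) * Real.pi = ((1 + 2*e : ℕ) : ℝ) * (Real.pi/2) by push_cast; ring,
    Zrot_k]

end CliffNF
namespace CliffNF
open Complex Matrix

section DmTables

lemma cnj_Dm1_X : cnj (Dm 1) PauliX = PauliX := by
  rw [cnj, Dm_ct]; ext i j
  fin_cases i <;> fin_cases j <;>
    simp [Dm, PauliX, PauliY, PauliZ, Matrix.mul_apply, Fin.sum_univ_two, Complex.conj_I]

lemma cnj_DmI_X : cnj (Dm Complex.I) PauliX = PauliY := by
  rw [cnj, Dm_ct]; ext i j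
  fin_cases i <;> fin_cases j <;>
    simp [Dm, PauliX, PauliY, PauliZ, Matrix.mul_apply, Fin.sum_univ_two, Complex.conj_I]

lemma cnj_Dmn1_X : cnj (Dm (-1)) PauliX = -PauliX := by
  rw [cnj, Dm_ct]; ext i j
  fin_cases i <;> fin_cases j <;>
    simp [Dm, PauliX, PauliY, PauliZ, Matrix.mul_apply, Fin.sum_univ_two, Complex.conj_I]

lemma cnj_DmnI_X : cnj (Dm (-Complex.I)) PauliX = -PauliY := by
  rw [cnj, Dm_ct]; ext i j
  fin_cases i <;> fin_cases j <;>
    simp [Dm, PauliX, PauliY, PauliZ, Matrix.mul_apply, Fin.sum_univ_two, Complex.conj_I]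

lemma cnj_Dm1_Y : cnj (Dm 1) PauliY = PauliY := by
  rw [cnj, Dm_ct]; ext i j
  fin_cases i <;> fin_cases j <;>
    simp [Dm, PauliX, PauliY, PauliZ, Matrix.mul_apply, Fin.sum_univ_two, Complex.conj_I]

lemma cnj_DmI_Y : cnj (Dm Complex.I) PauliY = -PauliX := by
  rw [cnj, Dm_ct]; ext i j
  fin_cases i <;> fin_cases j <;>
    simp [Dm, PauliX, PauliY, PauliZ, Matrix.mul_apply, Fin.sum_univ_two, Complex.conj_I,
      Complex.I_mul_I]

lemma cnj_Dmn1_Y : cnj (Dm (-1)) PauliY = -PauliY := by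
  rw [cnj, Dm_ct]; ext i j
  fin_cases i <;> fin_cases j <;>
    simp [Dm, PauliX, PauliY, PauliZ, Matrix.mul_apply, Fin.sum_univ_two, Complex.conj_I]

lemma cnj_DmnI_Y : cnj (Dm (-Complex.I)) PauliY = PauliX := by
  rw [cnj, Dm_ct]; ext i j
  fin_cases i <;> fin_cases j <;>
    simp [Dm, PauliX, PauliY, PauliZ, Matrix.mul_apply, Fin.sum_univ_two, Complex.conj_I,
      Complex.I_mul_I]

lemma cnj_Dm1_Z : cnj (Dm 1) PauliZ = PauliZ := by
  rw [cnj, Dm_ct]; ext i j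
  fin_cases i <;> fin_cases j <;>
    simp [Dm, PauliX, PauliY, PauliZ, Matrix.mul_apply, Fin.sum_univ_two, Complex.conj_I]

lemma cnj_DmI_Z : cnj (Dm Complex.I) PauliZ = PauliZ := by
  rw [cnj, Dm_ct]; ext i j
  fin_cases i <;> fin_cases j <;>
    simp [Dm, PauliX, PauliY, PauliZ, Matrix.mul_apply, Fin.sum_univ_two, Complex.conj_I,
      Complex.I_mul_I]

lemma cnj_Dmn1_Z : cnj (Dm (-1)) PauliZ = PauliZ := by
  rw [cnj, Dm_ct]; ext i j
  fin_cases i <;> fin_cases j <;>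
    simp [Dm, PauliX, PauliY, PauliZ, Matrix.mul_apply, Fin.sum_univ_two, Complex.conj_I]

lemma cnj_DmnI_Z : cnj (Dm (-Complex.I)) PauliZ = PauliZ := by
  rw [cnj, Dm_ct]; ext i j
  fin_cases i <;> fin_cases j <;>
    simp [Dm, PauliX, PauliY, PauliZ, Matrix.mul_apply, Fin.sum_univ_two, Complex.conj_I,
      Complex.I_mul_I]

end DmTables

lemma cnj_H (g : Matrix (Fin 2) (Fin 2) ℂ) :
    cnj Hmat g = (1/2 : ℂ) • (!![1,1;1,-1] * g * !![1,1;1,-1]) := by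
  rw [cnj, Hmat_ct, Hmat]
  simp only [smul_mul_assoc, Matrix.mul_smul, smul_smul, s2mul]

lemma cnj_H_X : cnj Hmat PauliX = PauliZ := by
  rw [cnj_H]; ext i j
  fin_cases i <;> fin_cases j <;>
    simp [PauliX, PauliZ, Matrix.mul_apply, Fin.sum_univ_two] <;> norm_num

lemma cnj_H_Y : cnj Hmat PauliY = -PauliY := by
  rw [cnj_H]; ext i j
  fin_cases i <;> fin_cases j <;>
    simp [PauliY, Matrix.mul_apply, Fin.sum_univ_two] <;> ring

lemma cnj_H_Z : cnj Hmat PauliZ = PauliX := by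
  rw [cnj_H]; ext i j
  fin_cases i <;> fin_cases j <;>
    simp [PauliX, PauliZ, Matrix.mul_apply, Fin.sum_univ_two] <;> norm_num

end CliffNF
namespace CliffNF
open Complex Matrix

def sp : Fin 2 × Fin 3 → Matrix (Fin 2) (Fin 2) ℂ :=
  fun q => (![1, -1] q.1 : ℂ) • ![PauliX, PauliY, PauliZ] q.2

def Btbl : Fin 4 → Fin 2 × Fin 3 := ![(0,1),(1,0),(1,1),(0,0)]
def nBtbl : Fin 4 → Fin 2 × Fin 3 := ![(1,1),(0,0),(0,1),(1,0)]

def tbl : (Fin 4 × Fin 4) ⊕ (Fin 2 × Fin 4) → (Fin 2 × Fin 3) × (Fin 2 × Fin 3)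
  | Sum.inl (a,b) =>
      (![(0,0),(0,1),(1,0),(1,1)] a,
       ![(0,2), nBtbl a, (1,2), Btbl a] b)
  | Sum.inr (e,g) =>
      ((e, 2), ![(1,1), ![(0,0),(1,0)] e, (0,1), ![(1,0),(0,0)] e] g)

lemma Zrot_pd2 : Zrot (Real.pi/2) = Dm Complex.I := by
  have h := Zrot_k 1
  norm_num at h
  exact h

lemma phi_nf (p : (Fin 4 × Fin 4) ⊕ (Fin 2 × Fin 4)) :
    cnj (normalForm p) PauliX = sp (tbl p).1 ∧ cnj (normalForm p) PauliZ = sp (tbl p).2 := by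
  rcases p with ⟨a, b⟩ | ⟨e, g⟩ <;>
    [(fin_cases a <;> fin_cases b); (fin_cases e <;> fin_cases g)] <;>
  refine ⟨?_, ?_⟩ <;>
  · simp only [normalForm, Xrot, cnj_mul, Zrot_pd2, Zrot_k, Zrot_eps,
      (show ((0:Fin 4):ℕ) = 0 from rfl), (show ((1:Fin 4):ℕ) = 1 from rfl),
      (show ((2:Fin 4):ℕ) = 2 from rfl), (show ((3:Fin 4):ℕ) = 3 from rfl),
      (show ((0:Fin 2):ℕ) = 0 from rfl), (show ((1:Fin 2):ℕ) = 1 from rfl),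
      pow_zero, pow_one, Complex.I_sq,
      (show Complex.I^3 = -Complex.I by rw [pow_succ, Complex.I_sq]; ring),
      (show Complex.I^(1+2*0) = Complex.I by norm_num),
      (show Complex.I^(1+2*1) = -Complex.I by
        rw [pow_succ, pow_succ, pow_one, Complex.I_mul_I]; ring)]
    norm_num [cnj_H_X, cnj_H_Y, cnj_H_Z, cnj_neg,
      cnj_Dm1_X, cnj_DmI_X, cnj_Dmn1_X, cnj_DmnI_X,
      cnj_Dm1_Y, cnj_DmI_Y, cnj_Dmn1_Y, cnj_DmnI_Y,
      cnj_Dm1_Z, cnj_DmI_Z, cnj_Dmn1_Z, cnj_DmnI_Z, sp, tbl, Btbl, nBtbl,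
        (show ![PauliX, PauliY, PauliZ] 2 = PauliZ from rfl)]

end CliffNF
namespace CliffNF
open Complex Matrix

lemma sp_inj : Function.Injective sp := by
  intro x y h
  fin_cases x <;> fin_cases y <;>
    first
    | rfl
    | (exfalso
       have h0 := Matrix.ext_iff.mpr h 0 0
       have h1 := Matrix.ext_iff.mpr h 0 1
       simp [sp, PauliX, PauliY, PauliZ, Complex.ext_iff] at h0 h1 <;> revert h0 h1 <;> norm_num)

lemma tbl_inj : Function.Injective tbl := by decide

lemma tbl_surj : ∀ q : (Fin 2 × Fin 3) × (Fin 2 × Fin 3), q.1.2 ≠ q.2.2 → ∃ p, tbl p = q := by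
  decide

lemma Hmat_mem : Hmat ∈ Matrix.unitaryGroup (Fin 2) ℂ := by
  rw [Matrix.mem_unitaryGroup_iff, Matrix.star_eq_conjTranspose, Hmat_ct, Hmat_mul_Hmat]

lemma Zrot_mem (θ : ℝ) : Zrot θ ∈ Matrix.unitaryGroup (Fin 2) ℂ := by
  rw [Matrix.mem_unitaryGroup_iff, Matrix.star_eq_conjTranspose]
  have he : Complex.exp (θ*Complex.I) * (starRingEnd ℂ) (Complex.exp (θ*Complex.I)) = 1 := by
    rw [← Complex.exp_conj, ← Complex.exp_add]
    simp [Complex.conj_ofReal]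
  ext i j
  fin_cases i <;> fin_cases j <;>
    simp [Zrot, Matrix.mul_apply, Fin.sum_univ_two, Matrix.conjTranspose_apply, he]

lemma nf_unitary (p : (Fin 4 × Fin 4) ⊕ (Fin 2 × Fin 4)) :
    normalForm p ∈ Matrix.unitaryGroup (Fin 2) ℂ := by
  rcases p with ⟨a, b⟩ | ⟨e, g⟩ <;> simp only [normalForm, Xrot]
  · exact mul_mem (Zrot_mem _) (mul_mem (mul_mem Hmat_mem (Zrot_mem _)) Hmat_mem)
  · exact mul_mem (mul_mem (mul_mem (mul_mem Hmat_mem (Zrot_mem _)) Hmat_mem) (Zrot_mem _))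
      (mul_mem (mul_mem Hmat_mem (Zrot_mem _)) Hmat_mem)

end CliffNF
namespace CliffNF
open Complex Matrix

lemma clifford_code (U : Matrix (Fin 2) (Fin 2) ℂ) (hU : IsClifford1 U)
    (g : Matrix (Fin 2) (Fin 2) ℂ) (hgX : g = PauliX ∨ g = PauliZ) :
    ∃ q : Fin 2 × Fin 3, cnj U g = sp q := by
  have hgmem : g ∈ Pauli1 := by
    rcases hgX with rfl | rfl
    · exact ⟨0, PauliX, by simp [Set.mem_insert_iff], by simp⟩
    · exact ⟨0, PauliZ, by simp [Set.mem_insert_iff], by simp⟩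
  obtain ⟨k, g', hg', heq⟩ := hU.2 g hgmem
  have hUU : Uᴴ * U = 1 := by
    have h := Matrix.mem_unitaryGroup_iff'.mp hU.1
    rwa [Matrix.star_eq_conjTranspose] at h
  have hgh : gᴴ = g := by
    rcases hgX with rfl | rfl <;>
      (ext i j; fin_cases i <;> fin_cases j <;>
        simp [PauliX, PauliZ, Matrix.conjTranspose_apply])
  have hherm : (U * g * Uᴴ)ᴴ = U * g * Uᴴ := by
    rw [Matrix.conjTranspose_mul, Matrix.conjTranspose_mul,
      Matrix.conjTranspose_conjTranspose, hgh, Matrix.mul_assoc]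
  simp only [Set.mem_insert_iff, Set.mem_singleton_iff] at hg'
  have hg'h : g'ᴴ = g' := by
    rcases hg' with rfl | rfl | rfl | rfl <;>
      (ext i j; fin_cases i <;> fin_cases j <;>
        simp [PauliX, PauliY, PauliZ, Matrix.conjTranspose_apply, Complex.conj_I])
  have hg'0 : g' ≠ 0 := by
    rcases hg' with rfl | rfl | rfl | rfl <;> intro h0
    · exact one_ne_zero h0
    · have := Matrix.ext_iff.mpr h0 0 1; simp [PauliX] at this
    · have := Matrix.ext_iff.mpr h0 0 1; simp [PauliY, Complex.I_ne_zero] at this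
    · have := Matrix.ext_iff.mpr h0 0 0; simp [PauliZ] at this
  have hcc : (starRingEnd ℂ) (Complex.I ^ (k:ℕ)) = Complex.I ^ (k:ℕ) := by
    have h2 := hherm
    rw [heq, Matrix.conjTranspose_smul, hg'h] at h2
    have h3 : ((starRingEnd ℂ) (Complex.I ^ (k:ℕ)) - Complex.I ^ (k:ℕ)) • g' = 0 := by
      rw [sub_smul, show (starRingEnd ℂ) (Complex.I ^ (k:ℕ)) • g' = Complex.I ^ (k:ℕ) • g' from h2,
        sub_self]
    rcases smul_eq_zero.mp h3 with h4 | h4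
    · exact sub_eq_zero.mp h4
    · exact absurd h4 hg'0
  have hsig : Complex.I ^ (k:ℕ) = 1 ∨ Complex.I ^ (k:ℕ) = -1 := by
    have hn : (k:ℕ) = 0 ∨ (k:ℕ) = 1 ∨ (k:ℕ) = 2 ∨ (k:ℕ) = 3 := by omega
    rcases hn with hn | hn | hn | hn <;> rw [hn] at hcc ⊢
    · left; rfl
    · exfalso; rw [pow_one, Complex.conj_I] at hcc
      rw [Complex.ext_iff] at hcc; norm_num at hcc
    · right; simp [Complex.I_sq]
    · exfalso
      rw [show Complex.I ^ 3 = -Complex.I by rw [pow_succ, Complex.I_sq]; ring,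
        map_neg, Complex.conj_I, neg_neg] at hcc
      rw [Complex.ext_iff] at hcc; norm_num at hcc
  have hg'ne1 : g' ≠ 1 := by
    rintro rfl
    have h5 : g = Complex.I ^ (k:ℕ) • 1 := by
      have h6 : Uᴴ * (U * g * Uᴴ) * U = g := by
        simp only [← Matrix.mul_assoc]
        rw [hUU, Matrix.one_mul, Matrix.mul_assoc, hUU, Matrix.mul_one]
      rw [heq] at h6
      rw [← h6]
      simp only [Matrix.mul_smul, Matrix.smul_mul, Matrix.mul_one, hUU]
    rcases hsig with hs | hs <;> rw [hs] at h5 <;> rcases hgX with rfl | rfl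
    · have := Matrix.ext_iff.mpr h5 0 1; simp [PauliX, Matrix.one_apply] at this
    · have := Matrix.ext_iff.mpr h5 1 1; simp [PauliZ, Matrix.one_apply] at this
      norm_num at this
    · have := Matrix.ext_iff.mpr h5 0 1; simp [PauliX, Matrix.one_apply] at this
    · have := Matrix.ext_iff.mpr h5 0 0; simp [PauliZ, Matrix.one_apply] at this
      norm_num at this
  rcases hg' with rfl | rfl | rfl | rfl
  · exact absurd rfl hg'ne1
  · rcases hsig with hs | hs
    · exact ⟨(0, 0), by rw [cnj, heq, hs]; simp [sp]⟩
    · exact ⟨(1, 0), by rw [cnj, heq, hs]; simp [sp]⟩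
  · rcases hsig with hs | hs
    · exact ⟨(0, 1), by rw [cnj, heq, hs]; simp [sp]⟩
    · exact ⟨(1, 1), by rw [cnj, heq, hs]; simp [sp]⟩
  · rcases hsig with hs | hs
    · exact ⟨(0, 2), by rw [cnj, heq, hs]; simp [sp]⟩
    · exact ⟨(1, 2), by rw [cnj, heq, hs]; simp [sp]⟩

end CliffNF
namespace CliffNF
open Complex Matrix

lemma XZ_anti : PauliX * PauliZ = -(PauliZ * PauliX) := by
  ext i j
  fin_cases i <;> fin_cases j <;>
    simp [PauliX, PauliZ, Matrix.mul_apply, Fin.sum_univ_two]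

lemma cnj_mul_pauli (U : Matrix (Fin 2) (Fin 2) ℂ) (hUU : Uᴴ * U = 1)
    (a b : Matrix (Fin 2) (Fin 2) ℂ) : cnj U a * cnj U b = cnj U (a * b) := by
  have key : ∀ M : Matrix (Fin 2) (Fin 2) ℂ, Uᴴ * (U * M) = M := fun M => by
    rw [← Matrix.mul_assoc, hUU, Matrix.one_mul]
  simp only [cnj, Matrix.mul_assoc, key]

lemma codes_ne (U : Matrix (Fin 2) (Fin 2) ℂ) (hUU : Uᴴ * U = 1) (qx qz : Fin 2 × Fin 3)
    (hx : cnj U PauliX = sp qx) (hz : cnj U PauliZ = sp qz) : qx.2 ≠ qz.2 := by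
  have hanti : sp qx * sp qz = -(sp qz * sp qx) := by
    rw [← hx, ← hz, cnj_mul_pauli U hUU, cnj_mul_pauli U hUU, XZ_anti, cnj_neg]
  intro hj
  rcases qx with ⟨s, j⟩
  rcases qz with ⟨t, j'⟩
  simp only at hj
  subst hj
  fin_cases s <;> fin_cases t <;> fin_cases j <;>
    norm_num [sp, PauliX, PauliY, PauliZ, Matrix.mul_fin_two, smul_smul,
      ← Matrix.ext_iff, Fin.forall_fin_two, Complex.ext_iff] at hanti <;>
    (have h00 := congrFun (congrFun hanti 0) 0; norm_num at h00)

lemma eq_up_to_phase (U N : Matrix (Fin 2) (Fin 2) ℂ)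
    (hUu : U ∈ Matrix.unitaryGroup (Fin 2) ℂ) (hNu : N ∈ Matrix.unitaryGroup (Fin 2) ℂ)
    (hx : cnj U PauliX = cnj N PauliX) (hz : cnj U PauliZ = cnj N PauliZ) :
    ∃ c : ℂ, ‖c‖ = 1 ∧ U = c • N := by
  have hUU : Uᴴ * U = 1 := by
    have h := Matrix.mem_unitaryGroup_iff'.mp hUu; rwa [Matrix.star_eq_conjTranspose] at h
  have hNN : Nᴴ * N = 1 := by
    have h := Matrix.mem_unitaryGroup_iff'.mp hNu; rwa [Matrix.star_eq_conjTranspose] at h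
  have hNN2 : N * Nᴴ = 1 := by
    have h := Matrix.mem_unitaryGroup_iff.mp hNu; rwa [Matrix.star_eq_conjTranspose] at h
  set V := Nᴴ * U with hV
  have hVV : Vᴴ * V = 1 := by
    rw [hV, Matrix.conjTranspose_mul, Matrix.conjTranspose_conjTranspose]
    calc Uᴴ * N * (Nᴴ * U) = Uᴴ * (N * Nᴴ) * U := by simp [Matrix.mul_assoc]
      _ = 1 := by rw [hNN2, Matrix.mul_one, hUU]
  have hcomm : ∀ P, cnj U P = cnj N P → V * P = P * V := by
    intro P hP
    have h1 : V * P * Vᴴ = P := by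
      rw [hV, Matrix.conjTranspose_mul, Matrix.conjTranspose_conjTranspose]
      calc Nᴴ * U * P * (Uᴴ * N) = Nᴴ * (U * P * Uᴴ) * N := by simp [Matrix.mul_assoc]
        _ = Nᴴ * (N * P * Nᴴ) * N := by
            rw [show U * P * Uᴴ = cnj U P from rfl, hP]; rfl
        _ = (Nᴴ * N) * P * (Nᴴ * N) := by simp [Matrix.mul_assoc]
        _ = P := by rw [hNN]; simp
    calc V * P = V * P * (Vᴴ * V) := by rw [hVV, Matrix.mul_one]
      _ = (V * P * Vᴴ) * V := by simp [Matrix.mul_assoc]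
      _ = P * V := by rw [h1]
  have hVX := hcomm PauliX hx
  have hVZ := hcomm PauliZ hz
  have e01 : V 0 1 = 0 := by
    have h := Matrix.ext_iff.mpr hVZ 0 1
    simp [Matrix.mul_apply, Fin.sum_univ_two, PauliZ] at h
    linear_combination (-1/2 : ℂ) * h
  have e10 : V 1 0 = 0 := by
    have h := Matrix.ext_iff.mpr hVZ 1 0
    simp [Matrix.mul_apply, Fin.sum_univ_two, PauliZ] at h
    linear_combination (1/2 : ℂ) * h
  have e0011 : V 0 0 = V 1 1 := by
    have h := Matrix.ext_iff.mpr hVX 0 1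
    simpa [Matrix.mul_apply, Fin.sum_univ_two, PauliX] using h
  have hVc : V = V 0 0 • 1 := by
    ext i j
    fin_cases i <;> fin_cases j
    · simp [Matrix.one_apply]
    · simp [Matrix.one_apply, e01]
    · simp [Matrix.one_apply, e10]
    · simp [Matrix.one_apply]; exact e0011.symm
  have hc1 : (starRingEnd ℂ) (V 0 0) * V 0 0 = 1 := by
    have h := Matrix.ext_iff.mpr hVV 0 0
    simpa [Matrix.mul_apply, Fin.sum_univ_two, Matrix.conjTranspose_apply, e10,
      Matrix.one_apply] using h
  have hnorm : ‖V 0 0‖ = 1 := by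
    have h2 : Complex.normSq (V 0 0) = 1 := by
      have := Complex.normSq_eq_conj_mul_self (z := V 0 0)
      rw [hc1] at this
      exact_mod_cast this
    rw [Complex.norm_def, h2, Real.sqrt_one]
  have hNV : N * V = U := by rw [hV, ← Matrix.mul_assoc, hNN2, Matrix.one_mul]
  refine ⟨V 0 0, hnorm, ?_⟩
  calc U = N * V := hNV.symm
    _ = N * (V 0 0 • 1) := by rw [← hVc]
    _ = V 0 0 • N := by rw [Matrix.mul_smul, Matrix.mul_one]

end CliffNF
namespace CliffNF
open Complex Matrix

lemma smul_cnj (c : ℂ) (hc : ‖c‖ = 1) (N g : Matrix (Fin 2) (Fin 2) ℂ) :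
    cnj (c • N) g = cnj N g := by
  rw [cnj, cnj, Matrix.conjTranspose_smul, Matrix.smul_mul, Matrix.smul_mul,
    Matrix.mul_smul, smul_smul]
  have h1 : c * star c = 1 := by
    rw [show (star c : ℂ) = (starRingEnd ℂ) c from rfl, Complex.mul_conj]
    norm_cast
    rw [Complex.normSq_eq_norm_sq, hc]
    norm_num
  rw [h1, one_smul]

end CliffNF

theorem clifford1_normal_form' (U : Matrix (Fin 2) (Fin 2) ℂ) (hU : IsClifford1 U) :
    ∃! p : (Fin 4 × Fin 4) ⊕ (Fin 2 × Fin 4), ∃ c : ℂ, ‖c‖ = 1 ∧ U = c • normalForm p := by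
  classical
  obtain ⟨qx, hqx⟩ := CliffNF.clifford_code U hU PauliX (Or.inl rfl)
  obtain ⟨qz, hqz⟩ := CliffNF.clifford_code U hU PauliZ (Or.inr rfl)
  have hUU : Uᴴ * U = 1 := by
    have h := Matrix.mem_unitaryGroup_iff'.mp hU.1
    rwa [Matrix.star_eq_conjTranspose] at h
  have hne := CliffNF.codes_ne U hUU qx qz hqx hqz
  obtain ⟨p, hp⟩ := CliffNF.tbl_surj (qx, qz) hne
  have hx : CliffNF.cnj U PauliX = CliffNF.cnj (normalForm p) PauliX := by
    rw [hqx, (CliffNF.phi_nf p).1, hp]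
  have hz : CliffNF.cnj U PauliZ = CliffNF.cnj (normalForm p) PauliZ := by
    rw [hqz, (CliffNF.phi_nf p).2, hp]
  obtain ⟨c, hc, hceq⟩ :=
    CliffNF.eq_up_to_phase U (normalForm p) hU.1 (CliffNF.nf_unitary p) hx hz
  refine ⟨p, ⟨c, hc, hceq⟩, ?_⟩
  rintro q ⟨d, hd, hdeq⟩
  have h1 : CliffNF.sp (CliffNF.tbl q).1 = CliffNF.sp (CliffNF.tbl p).1 := by
    rw [← (CliffNF.phi_nf q).1, ← (CliffNF.phi_nf p).1]
    calc CliffNF.cnj (normalForm q) PauliX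
        = CliffNF.cnj U PauliX := by rw [hdeq, CliffNF.smul_cnj d hd]
      _ = CliffNF.cnj (normalForm p) PauliX := hx
  have h2 : CliffNF.sp (CliffNF.tbl q).2 = CliffNF.sp (CliffNF.tbl p).2 := by
    rw [← (CliffNF.phi_nf q).2, ← (CliffNF.phi_nf p).2]
    calc CliffNF.cnj (normalForm q) PauliZ
        = CliffNF.cnj U PauliZ := by rw [hdeq, CliffNF.smul_cnj d hd]
      _ = CliffNF.cnj (normalForm p) PauliZ := hz
  exact CliffNF.tbl_inj (Prod.ext_iff.mpr ⟨CliffNF.sp_inj h1, CliffNF.sp_inj h2⟩)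
/-- Every single-qubit Clifford unitary is equal, up to a complex unit scalar, to exactly
one of the 24 normal-form matrices. -/
theorem clifford1_normal_form (U : Matrix (Fin 2) (Fin 2) ℂ) (hU : IsClifford1 U) :
    ∃! p : (Fin 4 × Fin 4) ⊕ (Fin 2 × Fin 4), ∃ c : ℂ, ‖c‖ = 1 ∧ U = c • normalForm p := by
  exact clifford1_normal_form' U hU
end
end

section
/- For every finite simple graph G on vertex set Fin n and every vertex v, there exists a complex unit scalar c such that |G⋆v⟩ = c · (R_X)_v · (∏_{u ∈ N_G(v)} (R_Z^{-1})_u) |G⟩, where G⋆v is the local complementation of G about v, N_G(v) is the neighbourhood of v in G, R_Z = diag(1,i), R_X = H·R_Z·H with H = (1/√2)[[1,1],[1,-1]], and the subscripts indicate on which qubit the single-qubit operator acts (identity on all others). -/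
open scoped Matrix BigOperators
open scoped Classical

noncomputable section

/-- The (diagonal) product `∏_{u ∈ S} (R_Z⁻¹)_u` over the qubits in `S`, where
`R_Z = Z_{π/2} = diag(1,i)`. -/
def rzInvProd {n : ℕ} (S : Finset (Fin n)) : QOp n :=
  Matrix.diagonal fun x => ∏ u ∈ S, (Zrot (Real.pi / 2))⁻¹ (x u) (x u)


namespace GraphStateLC

lemma fin2_cases (a : Fin 2) : a = 0 ∨ a = 1 := by
  fin_cases a <;> simp

lemma fin2_val_mul_self (a : Fin 2) : (a : ℕ) * (a : ℕ) = (a : ℕ) := by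
  fin_cases a <;> simp

lemma applyOn_mulVec {n : ℕ} (v : Fin n) (A : Matrix (Fin 2) (Fin 2) ℂ) (ψ : QState n)
    (x : Fin n → Fin 2) :
    (applyOn v A).mulVec ψ x
      = A (x v) 0 * ψ (Function.update x v 0) + A (x v) 1 * ψ (Function.update x v 1) := by
  classical
  have hne : Function.update x v 0 ≠ Function.update x v 1 := by
    intro h
    have h' := congrFun h v
    simp at h'
  have hmem : ∀ b : Fin 2, applyOn v A x (Function.update x v b) = A (x v) b := by
    intro b
    have hc : ∀ u, u ≠ v → x u = Function.update x v b u := by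
      intro u hu; rw [Function.update_of_ne hu]
    show (if ∀ u, u ≠ v → x u = Function.update x v b u
        then A (x v) (Function.update x v b v) else 0) = A (x v) b
    rw [if_pos hc, Function.update_self]
  have hsum : (applyOn v A).mulVec ψ x
      = ∑ y ∈ ({Function.update x v 0, Function.update x v 1} : Finset (Fin n → Fin 2)),
          applyOn v A x y * ψ y := by
    have hdef : (applyOn v A).mulVec ψ x = ∑ y, applyOn v A x y * ψ y := rfl
    rw [hdef]
    refine (Finset.sum_subset (Finset.subset_univ _) ?_).symm
    intro y _ hy
    have hcond : ¬ (∀ u, u ≠ v → x u = y u) := by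
      intro hcond
      apply hy
      have hyu : y = Function.update x v (y v) := by
        funext u
        by_cases hu : u = v
        · subst hu; simp
        · rw [Function.update_of_ne hu]; exact (hcond u hu).symm
      rcases fin2_cases (y v) with h | h <;> rw [hyu, h] <;> simp
    simp [applyOn, hcond]
  rw [hsum, Finset.sum_pair hne, hmem 0, hmem 1]

/-- The set of ordered pairs `(u,w)` with `u < w`. -/
def ltP (n : ℕ) : Finset (Fin n × Fin n) := Finset.univ.filter fun p => p.1 < p.2

lemma prod_edgeFinset {n : ℕ} (G : SimpleGraph (Fin n)) (f : Sym2 (Fin n) → ℂ) :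
    ∏ e ∈ G.edgeFinset, f e
      = ∏ p ∈ ltP n, (if G.Adj p.1 p.2 then f s(p.1, p.2) else 1) := by
  classical
  rw [← Finset.prod_filter]
  refine (Finset.prod_bij (fun p _ => s(p.1, p.2)) ?_ ?_ ?_ ?_).symm
  · intro p hp
    simp only [ltP, Finset.mem_filter, Finset.mem_univ, true_and] at hp
    rw [SimpleGraph.mem_edgeFinset, SimpleGraph.mem_edgeSet]
    exact hp.2
  · intro p hp q hq h
    simp only [ltP, Finset.mem_filter, Finset.mem_univ, true_and] at hp hq
    rw [Sym2.eq_iff] at h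
    rcases h with ⟨h1, h2⟩ | ⟨h1, h2⟩
    · exact Prod.ext h1 h2
    · exfalso
      have h3 := hp.1
      rw [h1, h2] at h3
      exact absurd hq.1 (asymm h3)
  · intro e he
    rw [SimpleGraph.mem_edgeFinset] at he
    induction e using Sym2.ind with
    | _ a b =>
      rw [SimpleGraph.mem_edgeSet] at he
      rcases lt_or_gt_of_ne he.ne with h | h
      · exact ⟨(a, b), by simp [ltP, Finset.mem_filter, h, he], rfl⟩
      · exact ⟨(b, a), by simp [ltP, Finset.mem_filter, h, he.symm], Sym2.eq_swap⟩
  · intro p hp; rfl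

/-- The phase function of a graph as a product over ordered pairs. -/
def phi {n : ℕ} (G : SimpleGraph (Fin n)) (x : Fin n → Fin 2) : ℂ :=
  ∏ p ∈ ltP n, if G.Adj p.1 p.2 then (-1 : ℂ) ^ ((x p.1 : ℕ) * (x p.2 : ℕ)) else 1

lemma graphState_apply {n : ℕ} (G : SimpleGraph (Fin n)) (x : Fin n → Fin 2) :
    graphState G x = phi G x * ((1 / Real.sqrt 2 : ℝ) : ℂ) ^ n := by
  unfold graphState CZofEdges plusState
  rw [Matrix.mulVec_diagonal]
  congr 1
  rw [prod_edgeFinset G (fun e => czPhase e x)]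
  unfold phi
  refine Finset.prod_congr rfl fun p _ => ?_
  obtain ⟨a, b⟩ := p
  split
  · simp [czPhase]
  · rfl

/-- The part of the phase product avoiding the vertex `v`. -/
def phiOff {n : ℕ} (v : Fin n) (G : SimpleGraph (Fin n)) (x : Fin n → Fin 2) : ℂ :=
  ∏ p ∈ ltP n, if G.Adj p.1 p.2 ∧ p.1 ≠ v ∧ p.2 ≠ v
    then (-1 : ℂ) ^ ((x p.1 : ℕ) * (x p.2 : ℕ)) else 1

lemma pairs_to_neighbors {n : ℕ} (v : Fin n) (H : SimpleGraph (Fin n)) (F : Fin n → ℂ) :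
    (∏ p ∈ ltP n, if H.Adj p.1 p.2 ∧ (p.1 = v ∨ p.2 = v)
        then F (if p.1 = v then p.2 else p.1) else 1)
      = ∏ u ∈ H.neighborFinset v, F u := by
  classical
  rw [← Finset.prod_filter]
  refine Finset.prod_nbij' (fun p => if p.1 = v then p.2 else p.1)
    (fun u => if u < v then (u, v) else (v, u)) ?_ ?_ ?_ ?_ ?_
  · intro p hp
    simp only [ltP, Finset.mem_filter, Finset.mem_univ, true_and] at hp
    obtain ⟨hlt, hA, hv⟩ := hp
    rcases hv with h1 | h2
    · rw [if_pos h1, SimpleGraph.mem_neighborFinset]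
      exact h1 ▸ hA
    · have h1 : p.1 ≠ v := fun h => (ne_of_lt hlt) (h.trans h2.symm)
      rw [if_neg h1, SimpleGraph.mem_neighborFinset]
      exact h2 ▸ hA.symm
  · intro u hu
    rw [SimpleGraph.mem_neighborFinset] at hu
    have hne : u ≠ v := hu.ne'
    by_cases h : u < v
    · rw [if_pos h]
      simp only [ltP, Finset.mem_filter, Finset.mem_univ, true_and]
      exact ⟨h, hu.symm, by simp⟩
    · have hvu : v < u := lt_of_le_of_ne (not_lt.mp h) hne.symm
      rw [if_neg h]
      simp only [ltP, Finset.mem_filter, Finset.mem_univ, true_and]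
      exact ⟨hvu, hu, by simp⟩
  · intro p hp
    simp only [ltP, Finset.mem_filter, Finset.mem_univ, true_and] at hp
    obtain ⟨hlt, hA, hv⟩ := hp
    by_cases h1 : p.1 = v
    · rw [if_pos h1]
      have hnlt : ¬ p.2 < v := by rw [← h1]; exact asymm hlt
      rw [if_neg hnlt, ← h1]
    · rw [if_neg h1]
      have h2 : p.2 = v := hv.resolve_left h1
      have hlt' : p.1 < v := h2 ▸ hlt
      rw [if_pos hlt', ← h2]
  · intro u hu
    by_cases h : u < v
    · rw [if_pos h]
      simp [ne_of_lt h]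
    · rw [if_neg h]
      simp
  · intro p hp; rfl

lemma phi_update {n : ℕ} (H : SimpleGraph (Fin n)) (v : Fin n) (x : Fin n → Fin 2) (b : Fin 2) :
    phi H (Function.update x v b)
      = (-1 : ℂ) ^ ((b : ℕ) * ∑ u ∈ H.neighborFinset v, (x u : ℕ)) * phiOff v H x := by
  classical
  have key : ∀ p ∈ ltP n,
      (if H.Adj p.1 p.2 then
          (-1 : ℂ) ^ ((Function.update x v b p.1 : ℕ) * (Function.update x v b p.2 : ℕ))
        else 1)
        = (if H.Adj p.1 p.2 ∧ (p.1 = v ∨ p.2 = v)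
            then (-1 : ℂ) ^ ((b : ℕ) * (x (if p.1 = v then p.2 else p.1) : ℕ)) else 1)
          * (if H.Adj p.1 p.2 ∧ p.1 ≠ v ∧ p.2 ≠ v
            then (-1 : ℂ) ^ ((x p.1 : ℕ) * (x p.2 : ℕ)) else 1) := by
    intro p hp
    simp only [ltP, Finset.mem_filter, Finset.mem_univ, true_and] at hp
    by_cases hA : H.Adj p.1 p.2
    · by_cases h1 : p.1 = v
      · have h2 : p.2 ≠ v := fun h => (ne_of_lt hp) (h1.trans h.symm)
        have hc1 : H.Adj p.1 p.2 ∧ (p.1 = v ∨ p.2 = v) := ⟨hA, Or.inl h1⟩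
        have hc2 : ¬ (H.Adj p.1 p.2 ∧ p.1 ≠ v ∧ p.2 ≠ v) := fun h => h.2.1 h1
        rw [if_pos hc1, if_neg hc2, if_pos h1, mul_one, h1,
          Function.update_self, Function.update_of_ne h2, if_pos (h1 ▸ hA)]
      · by_cases h2 : p.2 = v
        · have hc1 : H.Adj p.1 p.2 ∧ (p.1 = v ∨ p.2 = v) := ⟨hA, Or.inr h2⟩
          have hc2 : ¬ (H.Adj p.1 p.2 ∧ p.1 ≠ v ∧ p.2 ≠ v) := fun h => h.2.2 h2
          rw [if_pos hc1, if_neg hc2, if_neg h1, mul_one, h2,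
            Function.update_self, Function.update_of_ne h1, mul_comm ((x p.1 : ℕ)) ((b : ℕ)),
            if_pos (h2 ▸ hA)]
        · have hc1 : H.Adj p.1 p.2 ∧ p.1 ≠ v ∧ p.2 ≠ v := ⟨hA, h1, h2⟩
          have hc2 : ¬ (H.Adj p.1 p.2 ∧ (p.1 = v ∨ p.2 = v)) := fun h => h.2.elim h1 h2
          rw [if_pos hc1, if_neg hc2, one_mul,
            Function.update_of_ne h1, Function.update_of_ne h2, if_pos hA]
    · simp [hA]
  unfold phi
  rw [Finset.prod_congr rfl key, Finset.prod_mul_distrib]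
  congr 1
  exact (pairs_to_neighbors v H (fun u => (-1 : ℂ) ^ ((b : ℕ) * (x u : ℕ)))).trans
    (by rw [Finset.prod_pow_eq_pow_sum, ← Finset.mul_sum])

lemma localComp_adj {n : ℕ} (G : SimpleGraph (Fin n)) (v a b : Fin n) :
    (localComp G v).Adj a b ↔
      (G.Adj a v ∧ G.Adj b v ∧ a ≠ b ∧ ¬ G.Adj a b)
        ∨ (G.Adj a b ∧ ¬ (G.Adj a v ∧ G.Adj b v)) :=
  Iff.rfl

lemma localComp_neighborFinset {n : ℕ} (G : SimpleGraph (Fin n)) (v : Fin n) :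
    (localComp G v).neighborFinset v = G.neighborFinset v := by
  ext u
  simp only [SimpleGraph.mem_neighborFinset, localComp_adj]
  constructor
  · rintro (⟨h1, _, _, _⟩ | ⟨h1, _⟩)
    · exact absurd h1 (G.loopless.irrefl v)
    · exact h1
  · intro h
    exact Or.inr ⟨h, fun hc => G.loopless.irrefl v hc.1⟩

lemma phiOff_localComp {n : ℕ} (G : SimpleGraph (Fin n)) (v : Fin n) (x : Fin n → Fin 2) :
    phiOff v (localComp G v) x
      = phiOff v G x
        * ∏ p ∈ ltP n, (if G.Adj v p.1 ∧ G.Adj v p.2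
            then (-1 : ℂ) ^ ((x p.1 : ℕ) * (x p.2 : ℕ)) else 1) := by
  classical
  unfold phiOff
  rw [← Finset.prod_mul_distrib]
  refine Finset.prod_congr rfl fun p hp => ?_
  simp only [ltP, Finset.mem_filter, Finset.mem_univ, true_and] at hp
  have hne : p.1 ≠ p.2 := ne_of_lt hp
  by_cases h1 : p.1 = v
  · have hN : ¬ (G.Adj v p.1 ∧ G.Adj v p.2) := by
      rw [h1]; rintro ⟨h, _⟩; exact G.loopless.irrefl v h
    simp [h1, hN]
  · by_cases h2 : p.2 = v
    · have hN : ¬ (G.Adj v p.1 ∧ G.Adj v p.2) := by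
        rw [h2]; rintro ⟨_, h⟩; exact G.loopless.irrefl v h
      simp [h2, hN]
    · have hw2 : (-1 : ℂ) ^ ((x p.1 : ℕ) * (x p.2 : ℕ))
          * (-1 : ℂ) ^ ((x p.1 : ℕ) * (x p.2 : ℕ)) = 1 := by
        rw [← pow_add, ← two_mul, pow_mul, neg_one_sq, one_pow]
      by_cases hN : G.Adj v p.1 ∧ G.Adj v p.2
      · by_cases hA : G.Adj p.1 p.2
        · have hA' : ¬ (localComp G v).Adj p.1 p.2 := by
            rw [localComp_adj]
            rintro (⟨_, _, _, h4⟩ | ⟨_, h5⟩)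
            · exact h4 hA
            · exact h5 ⟨hN.1.symm, hN.2.symm⟩
          have hc1 : ¬ ((localComp G v).Adj p.1 p.2 ∧ p.1 ≠ v ∧ p.2 ≠ v) := fun h => hA' h.1
          have hc2 : G.Adj p.1 p.2 ∧ p.1 ≠ v ∧ p.2 ≠ v := ⟨hA, h1, h2⟩
          rw [if_neg hc1, if_pos hc2, if_pos hN]
          exact hw2.symm
        · have hA' : (localComp G v).Adj p.1 p.2 := by
            rw [localComp_adj]
            exact Or.inl ⟨hN.1.symm, hN.2.symm, hne, hA⟩
          have hc1 : (localComp G v).Adj p.1 p.2 ∧ p.1 ≠ v ∧ p.2 ≠ v := ⟨hA', h1, h2⟩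
          have hc2 : ¬ (G.Adj p.1 p.2 ∧ p.1 ≠ v ∧ p.2 ≠ v) := fun h => hA h.1
          rw [if_pos hc1, if_neg hc2, if_pos hN, one_mul]
      · by_cases hA : G.Adj p.1 p.2
        · have hA' : (localComp G v).Adj p.1 p.2 := by
            rw [localComp_adj]
            exact Or.inr ⟨hA, fun hc => hN ⟨hc.1.symm, hc.2.symm⟩⟩
          have hc1 : (localComp G v).Adj p.1 p.2 ∧ p.1 ≠ v ∧ p.2 ≠ v := ⟨hA', h1, h2⟩
          have hc2 : G.Adj p.1 p.2 ∧ p.1 ≠ v ∧ p.2 ≠ v := ⟨hA, h1, h2⟩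
          rw [if_pos hc1, if_pos hc2, if_neg hN, mul_one]
        · have hA' : ¬ (localComp G v).Adj p.1 p.2 := by
            rw [localComp_adj]
            rintro (⟨ha, hb, _, _⟩ | ⟨h, _⟩)
            · exact hN ⟨ha.symm, hb.symm⟩
            · exact hA h
          have hc1 : ¬ ((localComp G v).Adj p.1 p.2 ∧ p.1 ≠ v ∧ p.2 ≠ v) := fun h => hA' h.1
          have hc2 : ¬ (G.Adj p.1 p.2 ∧ p.1 ≠ v ∧ p.2 ≠ v) := fun h => hA h.1
          rw [if_neg hc1, if_neg hc2, if_neg hN, mul_one]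

lemma sq_sum_eq {n : ℕ} (N : Finset (Fin n)) (x : Fin n → Fin 2) :
    (∑ u ∈ N, (x u : ℕ)) * (∑ u ∈ N, (x u : ℕ))
      = (∑ u ∈ N, (x u : ℕ))
        + 2 * ∑ p ∈ ltP n,
            (if p.1 ∈ N ∧ p.2 ∈ N then (x p.1 : ℕ) * (x p.2 : ℕ) else 0) := by
  classical
  have hT : (∑ p ∈ ltP n, if p.1 ∈ N ∧ p.2 ∈ N then (x p.1 : ℕ) * (x p.2 : ℕ) else 0)
      = ∑ p ∈ (N ×ˢ N).filter (fun p => p.1 < p.2), (x p.1 : ℕ) * (x p.2 : ℕ) := by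
    rw [← Finset.sum_filter]
    congr 1
    ext p
    simp only [ltP, Finset.mem_filter, Finset.mem_univ, true_and, Finset.mem_product]
    tauto
  have hmain : (∑ u ∈ N, (x u : ℕ)) * (∑ u ∈ N, (x u : ℕ))
      = ∑ p ∈ N ×ˢ N, (x p.1 : ℕ) * (x p.2 : ℕ) := by
    rw [Finset.sum_mul_sum]
    exact (Finset.sum_product N N (fun p => (x p.1 : ℕ) * (x p.2 : ℕ))).symm
  have h1 : ∑ p ∈ (N ×ˢ N).filter (fun p => p.2 < p.1), (x p.1 : ℕ) * (x p.2 : ℕ)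
      = ∑ p ∈ (N ×ˢ N).filter (fun p => p.1 < p.2), (x p.1 : ℕ) * (x p.2 : ℕ) := by
    refine Finset.sum_nbij' Prod.swap Prod.swap ?_ ?_ ?_ ?_ ?_
    · intro p hp
      simp only [Finset.mem_filter, Finset.mem_product] at hp ⊢
      exact ⟨⟨hp.1.2, hp.1.1⟩, hp.2⟩
    · intro p hp
      simp only [Finset.mem_filter, Finset.mem_product] at hp ⊢
      exact ⟨⟨hp.1.2, hp.1.1⟩, hp.2⟩
    · intro p _; simp
    · intro p _; simp
    · intro p _; exact mul_comm _ _
  have h2 : ((N ×ˢ N).filter (fun p => ¬ p.1 < p.2)).filter (fun p => p.2 < p.1)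
      = (N ×ˢ N).filter (fun p => p.2 < p.1) := by
    ext p
    simp only [Finset.mem_filter]
    constructor
    · rintro ⟨⟨h, _⟩, h'⟩; exact ⟨h, h'⟩
    · rintro ⟨h, h'⟩; exact ⟨⟨h, asymm h'⟩, h'⟩
  have h3 : ((N ×ˢ N).filter (fun p => ¬ p.1 < p.2)).filter (fun p => ¬ p.2 < p.1)
      = (N ×ˢ N).filter (fun p => p.1 = p.2) := by
    ext p
    simp only [Finset.mem_filter]
    constructor
    · rintro ⟨⟨h, hh⟩, h'⟩; exact ⟨h, le_antisymm (not_lt.mp h') (not_lt.mp hh)⟩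
    · rintro ⟨h, h'⟩
      exact ⟨⟨h, by simp [h']⟩, by simp [h']⟩
  have h4 : ∑ p ∈ (N ×ˢ N).filter (fun p => p.1 = p.2), (x p.1 : ℕ) * (x p.2 : ℕ)
      = ∑ u ∈ N, (x u : ℕ) := by
    refine Finset.sum_nbij' Prod.fst (fun u => (u, u)) ?_ ?_ ?_ ?_ ?_
    · intro p hp
      simp only [Finset.mem_filter, Finset.mem_product] at hp
      exact hp.1.1
    · intro u hu
      simp only [Finset.mem_filter, Finset.mem_product]
      exact ⟨⟨hu, hu⟩, by simp⟩
    · intro p hp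
      simp only [Finset.mem_filter, Finset.mem_product] at hp
      exact Prod.ext rfl hp.2
    · intro u _; rfl
    · intro p hp
      simp only [Finset.mem_filter, Finset.mem_product] at hp
      rw [← hp.2, fin2_val_mul_self]
  rw [hT, hmain,
    ← Finset.sum_filter_add_sum_filter_not (N ×ˢ N) (fun p => p.1 < p.2)
      (fun p => (x p.1 : ℕ) * (x p.2 : ℕ)),
    ← Finset.sum_filter_add_sum_filter_not ((N ×ˢ N).filter (fun p => ¬ p.1 < p.2))
      (fun p => p.2 < p.1) (fun p => (x p.1 : ℕ) * (x p.2 : ℕ)),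
    h2, h3, h1, h4]
  ring

lemma Zrot_pi_div_two : Zrot (Real.pi / 2) = !![1, 0; 0, Complex.I] := by
  unfold Zrot
  have h : Complex.exp ((Real.pi / 2 : ℝ) * Complex.I) = Complex.I := by
    rw [Complex.exp_mul_I, ← Complex.ofReal_cos, ← Complex.ofReal_sin,
      Real.cos_pi_div_two, Real.sin_pi_div_two]
    simp
  rw [h]

lemma Zrot_pi_div_two_inv : (Zrot (Real.pi / 2))⁻¹ = !![1, 0; 0, -Complex.I] := by
  apply Matrix.inv_eq_right_inv
  rw [Zrot_pi_div_two, Matrix.mul_fin_two, Matrix.one_fin_two]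
  norm_num [mul_neg, Complex.I_mul_I]

lemma Zrot_inv_apply (a : Fin 2) :
    (Zrot (Real.pi / 2))⁻¹ a a = (-Complex.I) ^ (a : ℕ) := by
  fin_cases a <;> simp [Zrot_pi_div_two_inv]

lemma Xrot_pi_div_two : Xrot (Real.pi / 2)
    = !![(1 + Complex.I)/2, (1 - Complex.I)/2; (1 - Complex.I)/2, (1 + Complex.I)/2] := by
  unfold Xrot Hmat
  rw [Zrot_pi_div_two, Matrix.smul_mul, Matrix.mul_smul, Matrix.smul_mul, smul_smul]
  have hc : ((1 / Real.sqrt 2 : ℝ) : ℂ) * ((1 / Real.sqrt 2 : ℝ) : ℂ) = 1/2 := by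
    rw [← Complex.ofReal_mul, div_mul_div_comm, one_mul,
      Real.mul_self_sqrt (by norm_num : (0:ℝ) ≤ 2)]
    norm_num
  rw [hc, Matrix.mul_fin_two, Matrix.mul_fin_two]
  ext i j
  fin_cases i <;> fin_cases j <;>
    simp [Matrix.smul_apply] <;> ring

lemma key_identity (a : Fin 2) (s T : ℕ) (hT : s * s = s + 2 * T) :
    (-1 : ℂ) ^ ((a : ℕ) * s) * (-1 : ℂ) ^ T
      = Xrot (Real.pi / 2) a 0 * ((-Complex.I) ^ s * (-1 : ℂ) ^ (((0 : Fin 2) : ℕ) * s))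
        + Xrot (Real.pi / 2) a 1 * ((-Complex.I) ^ s * (-1 : ℂ) ^ (((1 : Fin 2) : ℕ) * s)) := by
  have h0 : ((0 : Fin 2) : ℕ) = 0 := rfl
  have h1 : ((1 : Fin 2) : ℕ) = 1 := rfl
  rw [h0, h1, zero_mul, pow_zero, mul_one, one_mul, Xrot_pi_div_two]
  have e00 : (!![(1 + Complex.I)/2, (1 - Complex.I)/2;
      (1 - Complex.I)/2, (1 + Complex.I)/2] : Matrix (Fin 2) (Fin 2) ℂ) 0 0
      = (1 + Complex.I)/2 := rfl
  have e01 : (!![(1 + Complex.I)/2, (1 - Complex.I)/2;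
      (1 - Complex.I)/2, (1 + Complex.I)/2] : Matrix (Fin 2) (Fin 2) ℂ) 0 1
      = (1 - Complex.I)/2 := rfl
  have e10 : (!![(1 + Complex.I)/2, (1 - Complex.I)/2;
      (1 - Complex.I)/2, (1 + Complex.I)/2] : Matrix (Fin 2) (Fin 2) ℂ) 1 0
      = (1 - Complex.I)/2 := rfl
  have e11 : (!![(1 + Complex.I)/2, (1 - Complex.I)/2;
      (1 - Complex.I)/2, (1 + Complex.I)/2] : Matrix (Fin 2) (Fin 2) ℂ) 1 1
      = (1 + Complex.I)/2 := rfl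
  have hXne : Complex.I ^ s ≠ 0 := pow_ne_zero _ Complex.I_ne_zero
  apply mul_left_cancel₀ hXne
  have hIs : Complex.I ^ s * (-Complex.I) ^ s = 1 := by
    rw [← mul_pow, mul_neg, Complex.I_mul_I, neg_neg, one_pow]
  have hIT : Complex.I ^ s * (-1 : ℂ) ^ T = Complex.I ^ (s * s) := by
    rw [hT, pow_add, pow_mul, Complex.I_sq]
  rcases fin2_cases a with rfl | rfl <;>
    rcases Nat.even_or_odd s with ⟨k, hk⟩ | ⟨k, hk⟩
  · have hss : Complex.I ^ (s * s) = 1 := by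
      have h4 : s * s = 4 * (k * k) := by rw [hk]; ring
      rw [h4, pow_mul, Complex.I_pow_four, one_pow]
    have hne : (-1 : ℂ) ^ s = 1 := Even.neg_one_pow ⟨k, hk⟩
    simp only [Fin.val_zero, zero_mul, pow_zero, one_mul, hne, mul_one, e00, e01, e10, e11]
    linear_combination hIT + hss - hIs
  · have hss : Complex.I ^ (s * s) = Complex.I := by
      have h4 : s * s = 4 * (k * k + k) + 1 := by rw [hk]; ring
      rw [h4, pow_add, pow_mul, Complex.I_pow_four, one_pow, pow_one, one_mul]
    have hne : (-1 : ℂ) ^ s = -1 := Odd.neg_one_pow ⟨k, hk⟩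
    simp only [Fin.val_zero, zero_mul, pow_zero, one_mul, hne, e00, e01, e10, e11]
    linear_combination hIT + hss - Complex.I * hIs
  · have hss : Complex.I ^ (s * s) = 1 := by
      have h4 : s * s = 4 * (k * k) := by rw [hk]; ring
      rw [h4, pow_mul, Complex.I_pow_four, one_pow]
    have hne : (-1 : ℂ) ^ s = 1 := Even.neg_one_pow ⟨k, hk⟩
    simp only [Fin.val_one, one_mul, hne, mul_one, e00, e01, e10, e11]
    linear_combination hIT + hss - hIs
  · have hss : Complex.I ^ (s * s) = Complex.I := by
      have h4 : s * s = 4 * (k * k + k) + 1 := by rw [hk]; ring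
      rw [h4, pow_add, pow_mul, Complex.I_pow_four, one_pow, pow_one, one_mul]
    have hne : (-1 : ℂ) ^ s = -1 := Odd.neg_one_pow ⟨k, hk⟩
    simp only [Fin.val_one, one_mul, hne, e00, e01, e10, e11]
    linear_combination -hIT - hss + Complex.I * hIs

end GraphStateLC

/-- Local complementation on graph states: `|G⋆v⟩` equals, up to a unit scalar,
`(R_X)_v · ∏_{u ∈ N_G(v)} (R_Z⁻¹)_u` applied to `|G⟩`, where `R_Z = diag(1,i)` and
`R_X = H·R_Z·H`. -/
theorem graphState_localComp {n : ℕ} (G : SimpleGraph (Fin n)) (v : Fin n) :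
    ∃ c : ℂ, ‖c‖ = 1 ∧
      graphState (localComp G v) =
        c • (applyOn v (Xrot (Real.pi / 2)) * rzInvProd (G.neighborFinset v)).mulVec
          (graphState G) := by
  classical
  refine ⟨1, by norm_num, ?_⟩
  funext x
  rw [one_smul, ← Matrix.mulVec_mulVec, GraphStateLC.applyOn_mulVec]
  have hv : v ∉ G.neighborFinset v := by simp
  have hrz : ∀ b : Fin 2,
      (rzInvProd (G.neighborFinset v)).mulVec (graphState G) (Function.update x v b)
        = (-Complex.I) ^ (∑ u ∈ G.neighborFinset v, (x u : ℕ))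
            * ((-1 : ℂ) ^ ((b : ℕ) * ∑ u ∈ G.neighborFinset v, (x u : ℕ))
              * GraphStateLC.phiOff v G x
              * ((1 / Real.sqrt 2 : ℝ) : ℂ) ^ n) := by
    intro b
    unfold rzInvProd
    rw [Matrix.mulVec_diagonal, GraphStateLC.graphState_apply, GraphStateLC.phi_update]
    have hprod : ∏ u ∈ G.neighborFinset v,
        (Zrot (Real.pi / 2))⁻¹ (Function.update x v b u) (Function.update x v b u)
          = (-Complex.I) ^ (∑ u ∈ G.neighborFinset v, (x u : ℕ)) := by
      refine (Finset.prod_congr rfl fun u hu => ?_).trans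
        (Finset.prod_pow_eq_pow_sum _ _ _)
      have hu' : u ≠ v := by rintro rfl; exact hv hu
      rw [Function.update_of_ne hu', GraphStateLC.Zrot_inv_apply]
    rw [hprod]
  rw [hrz 0, hrz 1, GraphStateLC.graphState_apply (localComp G v) x]
  have hT := GraphStateLC.sq_sum_eq (G.neighborFinset v) x
  have hphi : GraphStateLC.phi (localComp G v) x
      = (-1 : ℂ) ^ ((x v : ℕ) * ∑ u ∈ G.neighborFinset v, (x u : ℕ))
        * (GraphStateLC.phiOff v G x
          * (-1 : ℂ) ^ (∑ p ∈ GraphStateLC.ltP n,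
              if p.1 ∈ G.neighborFinset v ∧ p.2 ∈ G.neighborFinset v
                then (x p.1 : ℕ) * (x p.2 : ℕ) else 0)) := by
    conv_lhs => rw [← Function.update_eq_self v x]
    rw [GraphStateLC.phi_update, GraphStateLC.localComp_neighborFinset,
      GraphStateLC.phiOff_localComp]
    have hW : (∏ p ∈ GraphStateLC.ltP n, if G.Adj v p.1 ∧ G.Adj v p.2
          then (-1 : ℂ) ^ ((x p.1 : ℕ) * (x p.2 : ℕ)) else 1)
        = (-1 : ℂ) ^ (∑ p ∈ GraphStateLC.ltP n,
            if p.1 ∈ G.neighborFinset v ∧ p.2 ∈ G.neighborFinset v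
              then (x p.1 : ℕ) * (x p.2 : ℕ) else 0) := by
      rw [← Finset.prod_pow_eq_pow_sum (GraphStateLC.ltP n)
        (fun p => if p.1 ∈ G.neighborFinset v ∧ p.2 ∈ G.neighborFinset v
          then (x p.1 : ℕ) * (x p.2 : ℕ) else 0) (-1 : ℂ)]
      refine Finset.prod_congr rfl fun p _ => ?_
      simp only [SimpleGraph.mem_neighborFinset]
      by_cases h : G.Adj v p.1 ∧ G.Adj v p.2
      · rw [if_pos h, if_pos h]
      · rw [if_neg h, if_neg h, pow_zero]
    rw [hW]
  rw [hphi]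
  have hkey := GraphStateLC.key_identity (x v)
    (∑ u ∈ G.neighborFinset v, (x u : ℕ))
    (∑ p ∈ GraphStateLC.ltP n,
      if p.1 ∈ G.neighborFinset v ∧ p.2 ∈ G.neighborFinset v
        then (x p.1 : ℕ) * (x p.2 : ℕ) else 0) hT
  linear_combination
    (GraphStateLC.phiOff v G x * ((1 / Real.sqrt 2 : ℝ) : ℂ) ^ n) * hkey
end
end

section
/- Consider a simplified pair of rGS-LC data (G¹, A), (G², B) on n qubits, and suppose there exists an unpaired red node, i.e. a vertex p such that exactly one of A_p and B_p has a red node. Then the two states are not proportional: for every complex scalar c, |G¹; A⟩ ≠ c · |G²; B⟩. -/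
open scoped Matrix BigOperators
open scoped Classical

noncomputable section

lemma exp_conj' (θ : ℝ) : (starRingEnd ℂ) (Complex.exp (θ * Complex.I)) * Complex.exp (θ * Complex.I) = 1 := by
  rw [← Complex.exp_conj, ← Complex.exp_add]
  simp [Complex.exp_eq_one_iff]

lemma zrot_unitary (θ : ℝ) : (Zrot θ)ᴴ * Zrot θ = 1 := by
  ext i j
  fin_cases i <;> fin_cases j <;>
    simp [Zrot, Matrix.mul_apply, Fin.sum_univ_two, Matrix.conjTranspose_apply]
  linear_combination exp_conj' θ

lemma zrot_conj_Z (θ : ℝ) : (Zrot θ)ᴴ * PauliZ * Zrot θ = PauliZ := by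
  ext i j
  fin_cases i <;> fin_cases j <;>
    simp [Zrot, PauliZ, Matrix.mul_apply, Fin.sum_univ_two, Matrix.conjTranspose_apply]
  linear_combination exp_conj' θ

lemma exp_pi_div_two : Complex.exp ((Real.pi/2 : ℝ) * Complex.I) = Complex.I := by
  push_cast
  rw [Complex.exp_mul_I]
  simp [Complex.cos_pi_div_two, Complex.sin_pi_div_two]

lemma exp_three_pi_div_two : Complex.exp ((3*Real.pi/2 : ℝ) * Complex.I) = -Complex.I := by
  have : (((3*Real.pi/2 : ℝ)) : ℂ) = (Real.pi : ℂ) + (Real.pi/2 : ℝ) := by push_cast; ring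
  rw [this, add_mul, Complex.exp_add, exp_pi_div_two]
  simp [Complex.exp_pi_mul_I]

lemma sqrt2_sq : ((Real.sqrt 2 : ℝ) : ℂ) * ((Real.sqrt 2 : ℝ) : ℂ) = 2 := by
  rw [← Complex.ofReal_mul, Real.mul_self_sqrt (by norm_num)]; norm_num

lemma exp_pi_div_two' : Complex.exp ((Real.pi:ℂ) * Complex.I / 2) = Complex.I := by
  rw [show (Real.pi:ℂ) * Complex.I / 2 = ((Real.pi/2 : ℝ):ℂ) * Complex.I by push_cast; ring]
  exact exp_pi_div_two

lemma exp_three_pi_div_two' : Complex.exp (3 * (Real.pi:ℂ) * Complex.I / 2) = -Complex.I := by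
  rw [show 3 * (Real.pi:ℂ) * Complex.I / 2 = ((3*Real.pi/2 : ℝ):ℂ) * Complex.I by push_cast; ring]
  exact exp_three_pi_div_two

lemma red1_eq : Xrot (Real.pi/2) * Zrot (Real.pi/2)
    = (2:ℂ)⁻¹ • !![1+Complex.I, 1+Complex.I; 1-Complex.I, -1+Complex.I] := by
  have h2 := sqrt2_sq
  ext i j
  fin_cases i <;> fin_cases j <;>
  · simp [Xrot, Hmat, Zrot, Matrix.mul_apply, Fin.sum_univ_two, exp_pi_div_two, exp_pi_div_two', Matrix.smul_apply]
    field_simp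
    try simp only [exp_pi_div_two', exp_three_pi_div_two', pow_two, h2, Complex.I_mul_I]
    try ring_nf
    try simp only [Complex.I_sq]
    try ring_nf
    try norm_num

lemma red2_eq : Xrot (Real.pi/2) * Zrot (3*Real.pi/2)
    = (2:ℂ)⁻¹ • !![1+Complex.I, -1-Complex.I; 1-Complex.I, 1-Complex.I] := by
  have h2 := sqrt2_sq
  ext i j
  fin_cases i <;> fin_cases j <;>
  · simp [Xrot, Hmat, Zrot, Matrix.mul_apply, Fin.sum_univ_two, exp_pi_div_two,
      exp_three_pi_div_two, exp_pi_div_two', exp_three_pi_div_two', Matrix.smul_apply]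
    field_simp
    try simp only [exp_pi_div_two', exp_three_pi_div_two', pow_two, h2, Complex.I_mul_I]
    try ring_nf
    try simp only [Complex.I_sq]
    try ring_nf
    try norm_num
    try rw [show Complex.I * (Real.pi:ℂ) * (3 / 2) = ((3*Real.pi/2 : ℝ):ℂ) * Complex.I by push_cast; ring, exp_three_pi_div_two]
    try ring_nf
    try simp only [Complex.I_sq]
    try ring_nf

lemma red1_unitary :
    (Xrot (Real.pi/2) * Zrot (Real.pi/2))ᴴ * (Xrot (Real.pi/2) * Zrot (Real.pi/2)) = 1 := by
  rw [red1_eq]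
  ext i j
  fin_cases i <;> fin_cases j <;>
  · simp [Matrix.mul_apply, Fin.sum_univ_two, Matrix.conjTranspose_apply, Matrix.smul_apply,
      map_add, map_sub, Complex.conj_I]
    try ring_nf
    try simp [Complex.I_sq, map_ofNat (starRingEnd ℂ) 2]
    try norm_num

lemma red2_unitary :
    (Xrot (Real.pi/2) * Zrot (3*Real.pi/2))ᴴ * (Xrot (Real.pi/2) * Zrot (3*Real.pi/2)) = 1 := by
  rw [red2_eq]
  ext i j
  fin_cases i <;> fin_cases j <;>
  · simp [Matrix.mul_apply, Fin.sum_univ_two, Matrix.conjTranspose_apply, Matrix.smul_apply,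
      map_add, map_sub, Complex.conj_I]
    try ring_nf
    try simp [Complex.I_sq, map_ofNat (starRingEnd ℂ) 2]
    try norm_num

lemma red1_conj :
    (Xrot (Real.pi/2) * Zrot (Real.pi/2))ᴴ * PauliZ * (Xrot (Real.pi/2) * Zrot (Real.pi/2))
      = PauliX := by
  rw [red1_eq]
  ext i j
  fin_cases i <;> fin_cases j <;>
  · simp [Matrix.mul_apply, Fin.sum_univ_two, Matrix.conjTranspose_apply, Matrix.smul_apply,
      PauliZ, PauliX, map_add, map_sub, Complex.conj_I]
    try ring_nf
    try simp [Complex.I_sq, map_ofNat (starRingEnd ℂ) 2]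
    try norm_num

lemma red2_conj :
    (Xrot (Real.pi/2) * Zrot (3*Real.pi/2))ᴴ * PauliZ * (Xrot (Real.pi/2) * Zrot (3*Real.pi/2))
      = (-1 : ℂ) • PauliX := by
  rw [red2_eq]
  ext i j
  fin_cases i <;> fin_cases j <;>
  · simp [Matrix.mul_apply, Fin.sum_univ_two, Matrix.conjTranspose_apply, Matrix.smul_apply,
      PauliZ, PauliX, map_add, map_sub, Complex.conj_I]
    try ring_nf
    try simp [Complex.I_sq, map_ofNat (starRingEnd ℂ) 2]
    try norm_num



/-! ### Sum machinery -/

def gsign {n : ℕ} (G : SimpleGraph (Fin n)) (y : Fin n → Fin 2) : ℂ :=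
  ∏ e ∈ G.edgeFinset, czPhase e y

lemma czPhase_mk {n : ℕ} (u v : Fin n) (y : Fin n → Fin 2) :
    czPhase s(u, v) y = (-1 : ℂ) ^ ((y u : ℕ) * (y v : ℕ)) := rfl

lemma czPhase_conj {n : ℕ} (e : Sym2 (Fin n)) (y : Fin n → Fin 2) :
    (starRingEnd ℂ) (czPhase e y) = czPhase e y := by
  induction e using Sym2.inductionOn with
  | hf u v => rw [czPhase_mk]; simp [map_pow]

lemma czPhase_sq {n : ℕ} (e : Sym2 (Fin n)) (y : Fin n → Fin 2) :
    czPhase e y * czPhase e y = 1 := by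
  induction e using Sym2.inductionOn with
  | hf u v => rw [czPhase_mk, ← pow_add, ← two_mul, pow_mul]; norm_num

lemma gsign_conj {n : ℕ} (G : SimpleGraph (Fin n)) (y : Fin n → Fin 2) :
    (starRingEnd ℂ) (gsign G y) = gsign G y := by
  unfold gsign; rw [map_prod]; exact Finset.prod_congr rfl fun e _ => czPhase_conj e y

lemma gsign_sq {n : ℕ} (G : SimpleGraph (Fin n)) (y : Fin n → Fin 2) :
    gsign G y * gsign G y = 1 := by
  unfold gsign; rw [← Finset.prod_mul_distrib]
  rw [Finset.prod_congr rfl fun e _ => czPhase_sq e y]; simp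

lemma graphState_apply {n : ℕ} (G : SimpleGraph (Fin n)) (y : Fin n → Fin 2) :
    graphState G y = gsign G y * ((1 / Real.sqrt 2 : ℝ) : ℂ) ^ n := by
  unfold graphState CZofEdges plusState gsign
  rw [Matrix.mulVec_diagonal]

lemma sum_pi_prod {n : ℕ} (f : Fin n → Fin 2 → ℂ) :
    ∑ x : Fin n → Fin 2, ∏ j, f j (x j) = ∏ j, ∑ a, f j a :=
  (Fintype.prod_sum f).symm

def innerD {n : ℕ} (d : Fin n → Fin 2 → ℂ) (ψ : QState n) : ℂ :=
  ∑ x, (starRingEnd ℂ) (ψ x) * ((∏ j, d j (x j)) * ψ x)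

lemma innerD_smul {n : ℕ} (d : Fin n → Fin 2 → ℂ) (ψ : QState n) (c : ℂ) :
    innerD d (c • ψ) = (starRingEnd ℂ) c * c * innerD d ψ := by
  unfold innerD
  rw [Finset.mul_sum]
  refine Finset.sum_congr rfl fun x _ => ?_
  simp only [Pi.smul_apply, smul_eq_mul, map_mul]
  ring

lemma conj_diag_entry (M : Matrix (Fin 2) (Fin 2) ℂ) (d : Fin 2 → ℂ) (b b' : Fin 2) :
    (Mᴴ * Matrix.diagonal d * M) b b'
      = ∑ a, (starRingEnd ℂ) (M a b) * d a * M a b' := by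
  rw [Matrix.mul_apply]
  refine Finset.sum_congr rfl fun a _ => ?_
  rw [Matrix.mul_diagonal, Matrix.conjTranspose_apply]
  rfl

lemma innerD_expand {n : ℕ} (A : Fin n → Matrix (Fin 2) (Fin 2) ℂ)
    (G : SimpleGraph (Fin n)) (d : Fin n → Fin 2 → ℂ) :
    innerD d ((tensorOp A).mulVec (graphState G))
      = ((1 / 2 : ℂ)) ^ n * ∑ y, ∑ y', gsign G y * gsign G y' *
          ∏ j, ((A j)ᴴ * Matrix.diagonal (d j) * A j) (y j) (y' j) := by
  have c2 : ((1 / Real.sqrt 2 : ℝ) : ℂ) * ((1 / Real.sqrt 2 : ℝ) : ℂ) = 1 / 2 := by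
    rw [← Complex.ofReal_mul]
    rw [show (1 / Real.sqrt 2) * (1 / Real.sqrt 2) = 1 / 2 by
      rw [div_mul_div_comm, Real.mul_self_sqrt (by norm_num)]; norm_num]
    norm_num
  set c : ℂ := ((1 / Real.sqrt 2 : ℝ) : ℂ) with hc
  have hψ : ∀ x, (tensorOp A).mulVec (graphState G) x
      = ∑ y, (∏ j, A j (x j) (y j)) * (gsign G y * c ^ n) := by
    intro x
    unfold Matrix.mulVec dotProduct tensorOp
    refine Finset.sum_congr rfl fun y _ => ?_
    rw [graphState_apply]
    rfl
  unfold innerD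
  calc ∑ x, (starRingEnd ℂ) ((tensorOp A).mulVec (graphState G) x) *
        ((∏ j, d j (x j)) * (tensorOp A).mulVec (graphState G) x)
      = ∑ x : Fin n → Fin 2, ∑ y : Fin n → Fin 2, ∑ y' : Fin n → Fin 2,
          (gsign G y * gsign G y' * (c ^ n * c ^ n)) *
          ∏ j, ((starRingEnd ℂ) (A j (x j) (y j)) * d j (x j) * A j (x j) (y' j)) := by
        refine Finset.sum_congr rfl fun x _ => ?_
        rw [hψ x, map_sum, Finset.mul_sum, Finset.sum_mul_sum]
        refine Finset.sum_congr rfl fun y _ => Finset.sum_congr rfl fun y' _ => ?_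
        rw [map_mul, map_prod, map_mul, map_pow, gsign_conj, hc, Complex.conj_ofReal, ← hc]
        rw [Finset.prod_mul_distrib, Finset.prod_mul_distrib]
        ring
    _ = ∑ y : Fin n → Fin 2, ∑ y' : Fin n → Fin 2,
          (gsign G y * gsign G y' * (c ^ n * c ^ n)) *
          ∑ x : Fin n → Fin 2,
          ∏ j, ((starRingEnd ℂ) (A j (x j) (y j)) * d j (x j) * A j (x j) (y' j)) := by
        rw [Finset.sum_comm]
        refine Finset.sum_congr rfl fun y _ => ?_
        rw [Finset.sum_comm]
        exact Finset.sum_congr rfl fun y' _ => (Finset.mul_sum _ _ _).symm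
    _ = ((1 / 2 : ℂ)) ^ n * ∑ y, ∑ y', gsign G y * gsign G y' *
          ∏ j, ((A j)ᴴ * Matrix.diagonal (d j) * A j) (y j) (y' j) := by
        rw [Finset.mul_sum]
        refine Finset.sum_congr rfl fun y _ => ?_
        rw [Finset.mul_sum]
        refine Finset.sum_congr rfl fun y' _ => ?_
        rw [sum_pi_prod fun j a => (starRingEnd ℂ) (A j a (y j)) * d j a * A j a (y' j)]
        have : ∀ j, ((A j)ᴴ * Matrix.diagonal (d j) * A j) (y j) (y' j)
            = ∑ a, (starRingEnd ℂ) (A j a (y j)) * d j a * A j a (y' j) :=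
          fun j => conj_diag_entry (A j) (d j) (y j) (y' j)
        rw [Finset.prod_congr rfl fun j _ => (this j).symm]
        rw [← mul_pow, c2]
        ring



lemma fin2_coe_sub_add (b : Fin 2) : ((1 - b : Fin 2) : ℕ) + (b : ℕ) = 1 := by
  fin_cases b <;> rfl

lemma fin2_ne_iff {a b : Fin 2} (h : a ≠ b) : b = 1 - a := by
  fin_cases a <;> fin_cases b <;> simp_all <;> rfl

lemma edge_filter_eq_image {n : ℕ} (G : SimpleGraph (Fin n)) (p : Fin n) :
    G.edgeFinset.filter (fun e => p ∈ e) = (G.neighborFinset p).image (fun u => s(p, u)) := by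
  ext e
  simp only [Finset.mem_filter, Finset.mem_image, SimpleGraph.mem_edgeFinset,
    SimpleGraph.mem_neighborFinset]
  constructor
  · rintro ⟨he, hpe⟩
    induction e using Sym2.inductionOn with
    | hf a b =>
      rw [SimpleGraph.mem_edgeSet] at he
      rcases Sym2.mem_iff.mp hpe with rfl | rfl
      · exact ⟨b, he, rfl⟩
      · exact ⟨a, he.symm, Sym2.eq_swap⟩
  · rintro ⟨u, hu, rfl⟩
    exact ⟨G.mem_edgeSet.mpr hu, Sym2.mem_mk_left p u⟩

lemma gsign_flip {n : ℕ} (G : SimpleGraph (Fin n)) (p : Fin n) (y : Fin n → Fin 2) :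
    gsign G (Function.update y p (1 - y p)) * gsign G y
      = ∏ u ∈ G.neighborFinset p, (-1 : ℂ) ^ (y u : ℕ) := by
  set y' := Function.update y p (1 - y p) with hy'
  unfold gsign
  rw [← Finset.prod_mul_distrib]
  rw [← Finset.prod_filter_mul_prod_filter_not G.edgeFinset (fun e => p ∈ e)]
  have h2 : ∏ e ∈ G.edgeFinset.filter (fun e => ¬ p ∈ e), czPhase e y' * czPhase e y = 1 := by
    refine Finset.prod_eq_one fun e he => ?_
    rw [Finset.mem_filter] at he
    have hsame : czPhase e y' = czPhase e y := by
      induction e using Sym2.inductionOn with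
      | hf a b =>
        have ha : a ≠ p := fun h => he.2 (h ▸ Sym2.mem_mk_left a b)
        have hb : b ≠ p := fun h => he.2 (h ▸ Sym2.mem_mk_right a b)
        rw [czPhase_mk, czPhase_mk, hy', Function.update_of_ne ha, Function.update_of_ne hb]
    rw [hsame]
    exact czPhase_sq e y
  rw [h2, mul_one, edge_filter_eq_image]
  rw [Finset.prod_image (by
    intro u hu v hv h
    exact (Sym2.congr_right).mp h)]
  refine Finset.prod_congr rfl fun u hu => ?_
  rw [SimpleGraph.mem_neighborFinset] at hu
  have hup : u ≠ p := fun h => G.loopless.irrefl p (h ▸ hu)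
  rw [czPhase_mk, czPhase_mk, hy', Function.update_of_ne hup, Function.update_self,
    ← pow_add, ← add_mul, fin2_coe_sub_add, one_mul]

lemma prod_diag_entries {n : ℕ} (μ : Fin n → Fin 2 → ℂ) (y y' : Fin n → Fin 2) :
    (∏ j, (Matrix.diagonal (μ j)) (y j) (y' j))
      = if y = y' then ∏ j, μ j (y j) else 0 := by
  by_cases h : y = y'
  · subst h
    simp [Matrix.diagonal_apply_eq]
  · obtain ⟨j, hj⟩ := Function.ne_iff.mp h
    rw [if_neg h]
    exact Finset.prod_eq_zero (Finset.mem_univ j) (Matrix.diagonal_apply_ne (μ j) hj)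

lemma eval_diag {n : ℕ} (G : SimpleGraph (Fin n)) (μ : Fin n → Fin 2 → ℂ) :
    (∑ y : Fin n → Fin 2, ∑ y' : Fin n → Fin 2, gsign G y * gsign G y' *
        ∏ j, (Matrix.diagonal (μ j)) (y j) (y' j)) = ∏ j, (μ j 0 + μ j 1) := by
  have step : ∀ y : Fin n → Fin 2,
      (∑ y' : Fin n → Fin 2, gsign G y * gsign G y' *
        ∏ j, (Matrix.diagonal (μ j)) (y j) (y' j)) = ∏ j, μ j (y j) := by
    intro y
    rw [Finset.sum_eq_single_of_mem y (Finset.mem_univ y)]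
    · rw [prod_diag_entries, if_pos rfl, gsign_sq, one_mul]
    · intro y' _ hne
      rw [prod_diag_entries, if_neg (fun h => hne h.symm), mul_zero]
  rw [Finset.sum_congr rfl fun y _ => step y, sum_pi_prod]
  exact Finset.prod_congr rfl fun j _ => by rw [Fin.sum_univ_two]

lemma pauliX_entry_ne (b : Fin 2) : PauliX b (1 - b) = 1 := by
  fin_cases b <;> rfl

lemma pauliX_entry_eq (b : Fin 2) : PauliX b b = 0 := by
  fin_cases b <;> rfl

lemma eval_X {n : ℕ} (G : SimpleGraph (Fin n)) (p : Fin n) (s : ℂ)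
    (M : Fin n → Matrix (Fin 2) (Fin 2) ℂ)
    (hMp : M p = s • PauliX)
    (hMj : ∀ j, j ≠ p → M j = Matrix.diagonal
      (fun b : Fin 2 => if j ∈ G.neighborFinset p then (-1 : ℂ) ^ (b : ℕ) else 1)) :
    (∑ y : Fin n → Fin 2, ∑ y' : Fin n → Fin 2, gsign G y * gsign G y' *
        ∏ j, M j (y j) (y' j)) = s * 2 ^ n := by
  set μ : Fin n → Fin 2 → ℂ :=
    fun j b => if j ∈ G.neighborFinset p then (-1 : ℂ) ^ (b : ℕ) else 1 with hμ
  have step : ∀ y : Fin n → Fin 2,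
      (∑ y' : Fin n → Fin 2, gsign G y * gsign G y' * ∏ j, M j (y j) (y' j)) = s := by
    intro y
    set y' := Function.update y p (1 - y p) with hy'
    rw [Finset.sum_eq_single_of_mem y' (Finset.mem_univ y')]
    · -- the surviving term
      have hprod : (∏ j, M j (y j) (y' j)) = s * ∏ u ∈ G.neighborFinset p, (-1 : ℂ) ^ (y u : ℕ) := by
        rw [← Finset.mul_prod_erase Finset.univ _ (Finset.mem_univ p)]
        have h1 : M p (y p) (y' p) = s := by
          rw [hMp, hy', Function.update_self, Matrix.smul_apply, pauliX_entry_ne, smul_eq_mul,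
            mul_one]
        rw [h1]
        congr 1
        have h2 : ∀ j ∈ Finset.univ.erase p, M j (y j) (y' j) = μ j (y j) := by
          intro j hj
          have hjp : j ≠ p := Finset.ne_of_mem_erase hj
          rw [hMj j hjp, hy', Function.update_of_ne hjp, Matrix.diagonal_apply_eq]
        rw [Finset.prod_congr rfl h2]
        rw [← Finset.prod_subset (Finset.subset_erase.mpr
          ⟨Finset.subset_univ _, SimpleGraph.notMem_neighborFinset_self G p⟩)
          (fun j _ hj => by rw [hμ]; dsimp only; rw [if_neg hj])]
        exact Finset.prod_congr rfl fun u hu => by rw [hμ]; dsimp only; rw [if_pos hu]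
      rw [hprod, hy']
      have hflip := gsign_flip G p y
      calc gsign G y * gsign G (Function.update y p (1 - y p)) *
            (s * ∏ u ∈ G.neighborFinset p, (-1 : ℂ) ^ (y u : ℕ))
          = s * ((gsign G (Function.update y p (1 - y p)) * gsign G y) *
              ∏ u ∈ G.neighborFinset p, (-1 : ℂ) ^ (y u : ℕ)) := by ring
        _ = s := by
            have hone : ∀ u : Fin n, (-1 : ℂ) ^ (y u : ℕ) * (-1 : ℂ) ^ (y u : ℕ) = 1 := by
              intro u
              rw [← pow_add, ← two_mul, pow_mul]
              norm_num
            rw [hflip, ← Finset.prod_mul_distrib,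
              Finset.prod_congr rfl fun u _ => hone u, Finset.prod_const_one, mul_one]
    · -- all other y'' give zero
      intro y'' _ hne
      have : (∏ j, M j (y j) (y'' j)) = 0 := by
        by_cases hp : y'' p = y p
        · refine Finset.prod_eq_zero (Finset.mem_univ p) ?_
          rw [hMp, hp, Matrix.smul_apply, pauliX_entry_eq, smul_eq_mul, mul_zero]
        · have hpp : y'' p = 1 - y p := fin2_ne_iff fun h => hp h.symm
          have : ∃ j, j ≠ p ∧ y'' j ≠ y j := by
            by_contra hcon
            push_neg at hcon
            apply hne
            funext j
            by_cases hjp : j = p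
            · subst hjp; rw [hpp, hy', Function.update_self]
            · rw [hcon j hjp, hy', Function.update_of_ne hjp]
          obtain ⟨j, hjp, hjne⟩ := this
          refine Finset.prod_eq_zero (Finset.mem_univ j) ?_
          rw [hMj j hjp]
          exact Matrix.diagonal_apply_ne _ (fun h => hjne h.symm)
      rw [this, mul_zero]
  rw [Finset.sum_congr rfl fun y _ => step y, Finset.sum_const, Finset.card_univ]
  rw [Fintype.card_fun, Fintype.card_fin, Fintype.card_fin, nsmul_eq_mul]
  push_cast
  ring



/-! ### Bridge lemmas -/

lemma diag_Zentries : Matrix.diagonal (fun a : Fin 2 => (-1 : ℂ) ^ (a : ℕ)) = PauliZ := by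
  ext i j
  fin_cases i <;> fin_cases j <;> simp [PauliZ, Matrix.diagonal]

lemma Rset_unitary {M : Matrix (Fin 2) (Fin 2) ℂ} (h : M ∈ Rset) : Mᴴ * M = 1 := by
  rcases h with ⟨k, rfl⟩ | rfl | rfl
  · exact zrot_unitary _
  · exact red1_unitary
  · exact red2_unitary

lemma nonred_conjZ {M : Matrix (Fin 2) (Fin 2) ℂ} (h : M ∈ Rset) (hnr : ¬ hasRedNode M) :
    Mᴴ * PauliZ * M = PauliZ := by
  rcases h with ⟨k, rfl⟩ | h | h
  · exact zrot_conj_Z _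
  · exact absurd (Or.inl h) hnr
  · exact absurd (Or.inr h) hnr

lemma red_conjZ {M : Matrix (Fin 2) (Fin 2) ℂ} (h : hasRedNode M) :
    ∃ s : ℂ, s ≠ 0 ∧ Mᴴ * PauliZ * M = s • PauliX := by
  rcases h with rfl | rfl
  · exact ⟨1, one_ne_zero, by rw [red1_conj, one_smul]⟩
  · exact ⟨-1, by norm_num, red2_conj⟩

def dWfun {n : ℕ} (W : Finset (Fin n)) : Fin n → Fin 2 → ℂ :=
  fun j a => if j ∈ W then (-1 : ℂ) ^ (a : ℕ) else 1

lemma dWfun_mem {n : ℕ} {W : Finset (Fin n)} {j : Fin n} (hj : j ∈ W) :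
    Matrix.diagonal (dWfun W j) = PauliZ := by
  rw [show dWfun W j = fun a : Fin 2 => (-1 : ℂ) ^ (a : ℕ) from funext fun a => if_pos hj]
  exact diag_Zentries

lemma dWfun_not_mem {n : ℕ} {W : Finset (Fin n)} {j : Fin n} (hj : j ∉ W) :
    Matrix.diagonal (dWfun W j) = 1 := by
  rw [show dWfun W j = fun _ : Fin 2 => (1 : ℂ) from funext fun a => if_neg hj]
  exact Matrix.diagonal_one

lemma conjD {n : ℕ} (W : Finset (Fin n)) (B : Fin n → Matrix (Fin 2) (Fin 2) ℂ)
    (hU : ∀ j, (B j)ᴴ * B j = 1)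
    (hZ : ∀ j ∈ W, (B j)ᴴ * PauliZ * B j = PauliZ) (j : Fin n) :
    (B j)ᴴ * Matrix.diagonal (dWfun W j) * B j = Matrix.diagonal (dWfun W j) := by
  by_cases hj : j ∈ W
  · rw [dWfun_mem hj]
    exact hZ j hj
  · rw [dWfun_not_mem hj, Matrix.mul_one, hU j]

lemma innerD_zero {n : ℕ} (G : SimpleGraph (Fin n)) (B : Fin n → Matrix (Fin 2) (Fin 2) ℂ)
    (W : Finset (Fin n)) (hW : W.Nonempty)
    (hU : ∀ j, (B j)ᴴ * B j = 1)
    (hZ : ∀ j ∈ W, (B j)ᴴ * PauliZ * B j = PauliZ) :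
    innerD (dWfun W) ((tensorOp B).mulVec (graphState G)) = 0 := by
  rw [innerD_expand]
  rw [Finset.sum_congr rfl fun y _ => Finset.sum_congr rfl fun y' _ => by
    rw [Finset.prod_congr rfl fun j _ => by rw [conjD W B hU hZ j]]]
  rw [eval_diag]
  obtain ⟨q, hq⟩ := hW
  rw [Finset.prod_eq_zero (Finset.mem_univ q) (by
    show dWfun W q 0 + dWfun W q 1 = 0
    unfold dWfun
    rw [if_pos hq, if_pos hq]
    norm_num)]
  rw [mul_zero]

lemma innerD_one {n : ℕ} (G : SimpleGraph (Fin n)) (B : Fin n → Matrix (Fin 2) (Fin 2) ℂ)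
    (hU : ∀ j, (B j)ᴴ * B j = 1) :
    innerD (dWfun ∅) ((tensorOp B).mulVec (graphState G)) = 1 := by
  rw [innerD_expand]
  rw [Finset.sum_congr rfl fun y _ => Finset.sum_congr rfl fun y' _ => by
    rw [Finset.prod_congr rfl fun j _ => by
      rw [conjD ∅ B hU (fun j hj => absurd hj (Finset.notMem_empty j)) j]]]
  rw [eval_diag]
  have : ∀ j : Fin n, dWfun (∅ : Finset (Fin n)) j 0 + dWfun ∅ j 1 = 2 := by
    intro j
    unfold dWfun
    rw [if_neg (Finset.notMem_empty j), if_neg (Finset.notMem_empty j)]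
    norm_num
  rw [Finset.prod_congr rfl fun j _ => this j, Finset.prod_const, Finset.card_univ,
    Fintype.card_fin, ← mul_pow]
  norm_num

lemma innerD_stab {n : ℕ} (G : SimpleGraph (Fin n)) (A : Fin n → Matrix (Fin 2) (Fin 2) ℂ)
    (p : Fin n) (s : ℂ)
    (hU : ∀ j, (A j)ᴴ * A j = 1)
    (hAp : (A p)ᴴ * PauliZ * A p = s • PauliX)
    (hZ : ∀ j ∈ G.neighborFinset p, (A j)ᴴ * PauliZ * A j = PauliZ) :
    innerD (dWfun (insert p (G.neighborFinset p))) ((tensorOp A).mulVec (graphState G)) = s := by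
  set W := insert p (G.neighborFinset p) with hW
  rw [innerD_expand]
  rw [eval_X G p s (fun j => (A j)ᴴ * Matrix.diagonal (dWfun W j) * A j) ?_ ?_]
  · rw [mul_comm s, ← mul_assoc, ← mul_pow]
    norm_num
  · rw [dWfun_mem (Finset.mem_insert_self p _), hAp]
  · intro j hjp
    by_cases hj : j ∈ G.neighborFinset p
    · rw [dWfun_mem (Finset.mem_insert_of_mem hj), hZ j hj,
        show (fun b : Fin 2 => if j ∈ G.neighborFinset p then (-1 : ℂ) ^ (b : ℕ) else 1)
          = fun b : Fin 2 => (-1 : ℂ) ^ (b : ℕ) from funext fun b => if_pos hj]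
      exact diag_Zentries.symm
    · have hjW : j ∉ W := by
        rw [hW, Finset.mem_insert]
        rintro (rfl | h)
        · exact hjp rfl
        · exact hj h
      rw [dWfun_not_mem hjW, Matrix.mul_one, hU j,
        show (fun b : Fin 2 => if j ∈ G.neighborFinset p then (-1 : ℂ) ^ (b : ℕ) else 1)
          = fun _ : Fin 2 => (1 : ℂ) from funext fun b => if_neg hj]
      exact Matrix.diagonal_one.symm

lemma main_case {n : ℕ} (G₁ G₂ : SimpleGraph (Fin n))
    (A B : Fin n → Matrix (Fin 2) (Fin 2) ℂ) (hA : IsRGSLC G₁ A) (hB : IsRGSLC G₂ B)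
    (p : Fin n) (hAp : hasRedNode (A p)) (hBp : ¬ hasRedNode (B p))
    (hnb : ∀ j ∈ G₁.neighborFinset p, ¬ hasRedNode (B j)) :
    ∀ c : ℂ, rgslcState G₁ A ≠ c • rgslcState G₂ B := by
  intro c hceq
  set W := insert p (G₁.neighborFinset p) with hW
  obtain ⟨s, hs0, hsX⟩ := red_conjZ hAp
  have hUA : ∀ j, (A j)ᴴ * A j = 1 := fun j => Rset_unitary (hA.1 j)
  have hUB : ∀ j, (B j)ᴴ * B j = 1 := fun j => Rset_unitary (hB.1 j)
  have hZA : ∀ j ∈ G₁.neighborFinset p, (A j)ᴴ * PauliZ * A j = PauliZ := by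
    intro j hj
    refine nonred_conjZ (hA.1 j) fun hred => ?_
    exact hA.2 p j ((SimpleGraph.mem_neighborFinset _ _ _).mp hj) ⟨hAp, hred⟩
  have hZB : ∀ j ∈ W, (B j)ᴴ * PauliZ * B j = PauliZ := by
    intro j hj
    rcases Finset.mem_insert.mp hj with rfl | hj'
    · exact nonred_conjZ (hB.1 j) hBp
    · exact nonred_conjZ (hB.1 j) (hnb j hj')
  have h1 : innerD (dWfun W) (rgslcState G₁ A) = s :=
    innerD_stab G₁ A p s hUA hsX hZA
  have h2 : innerD (dWfun W) (rgslcState G₂ B) = 0 :=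
    innerD_zero G₂ B W (Finset.insert_nonempty _ _) hUB hZB
  rw [hceq, innerD_smul, h2, mul_zero] at h1
  exact hs0 h1.symm

/-- In a simplified pair of rGS-LC data, an unpaired red node implies the two states are
not proportional. -/
theorem rGSLC_unpaired_red_node_ne {n : ℕ} (G₁ G₂ : SimpleGraph (Fin n))
    (A B : Fin n → Matrix (Fin 2) (Fin 2) ℂ) (hA : IsRGSLC G₁ A) (hB : IsRGSLC G₂ B)
    (hsimp : SimplifiedPair G₁ A G₂ B) (p : Fin n)
    (hp : (hasRedNode (A p) ∧ ¬ hasRedNode (B p)) ∨ (¬ hasRedNode (A p) ∧ hasRedNode (B p))) :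
    ∀ c : ℂ, rgslcState G₁ A ≠ c • rgslcState G₂ B := by
  rcases hp with ⟨hAp, hBp⟩ | ⟨hAp, hBp⟩
  · -- red node at p in the first diagram
    have hnb : ∀ j ∈ G₁.neighborFinset p, ¬ hasRedNode (B j) := by
      intro j hj hBj
      have hadj : G₁.Adj p j := (SimpleGraph.mem_neighborFinset _ _ _).mp hj
      have hAj : ¬ hasRedNode (A j) := fun hAj => hA.2 p j hadj ⟨hAp, hAj⟩
      exact hsimp ⟨p, j, ⟨hAp, hBp⟩, ⟨hBj, hAj⟩, Or.inl hadj⟩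
    exact main_case G₁ G₂ A B hA hB p hAp hBp hnb
  · -- red node at p in the second diagram
    intro c hceq
    by_cases hc : c = 0
    · subst hc
      rw [zero_smul] at hceq
      have h1 : innerD (dWfun ∅) (rgslcState G₁ A) = 1 :=
        innerD_one G₁ A (fun j => Rset_unitary (hA.1 j))
      rw [hceq] at h1
      simp [innerD] at h1
    · have hnb : ∀ j ∈ G₂.neighborFinset p, ¬ hasRedNode (A j) := by
        intro j hj hAj
        have hadj : G₂.Adj p j := (SimpleGraph.mem_neighborFinset _ _ _).mp hj
        have hBj : ¬ hasRedNode (B j) := fun hBj => hB.2 p j hadj ⟨hBp, hBj⟩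
        exact hsimp ⟨j, p, ⟨hAj, hBj⟩, ⟨hBp, hAp⟩, Or.inr hadj.symm⟩
      have h2 : rgslcState G₂ B = c⁻¹ • rgslcState G₁ A := by
        rw [hceq, smul_smul, inv_mul_cancel₀ hc, one_smul]
      exact main_case G₂ G₁ B A hB hA p hBp hAp hnb c⁻¹ h2
end
end
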